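/- arXiv:2412.11570 — 8 statements merged into one kernel-verified Lean document; each statement's English description precedes it below -/
import Mathlib

section
/- For every positive integer κ, all quaternions α, β ∈ ℍ, every homogeneous polynomial P(X,Y) of degree κ with complex coefficients, and all (X₀,Y₀) ∈ ℂ², one has ∫_ℍ exp(2πi·tr(αy))·exp(−2π·N(y))·P((X₀,Y₀)·A(y+β)) dy = exp(−2π·N(α))·P((X₀,Y₀)·(√−1·A(ᾱ)+A(β))). (This is the evaluated form of the identity ∫_ℍ e(tr(αy)+√−1·ȳy)·σ_κ(y+β) dy = e(√−1·ᾱα)·σ_κ(√−1·ᾱ+β).) -/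
open MeasureTheory
open scoped ENNReal

noncomputable section

/-- The ℝ-algebra embedding `A : ℍ → M₂(ℂ)`,
`A(a₀+a₁i+a₂j+a₃k) = [[a₀+a₁√−1, a₂+a₃√−1],[−a₂+a₃√−1, a₀−a₁√−1]]`. -/
def Amap (q : Quaternion ℝ) : Matrix (Fin 2) (Fin 2) ℂ :=
  !![(q.re : ℂ) + (q.imI : ℂ) * Complex.I, (q.imJ : ℂ) + (q.imK : ℂ) * Complex.I;
     -(q.imJ : ℂ) + (q.imK : ℂ) * Complex.I, (q.re : ℂ) - (q.imI : ℂ) * Complex.I]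

/-- The coordinate identification `ℝ⁴ ≅ ℍ`. -/
def quatOf (a : Fin 4 → ℝ) : Quaternion ℝ := ⟨a 0, a 1, a 2, a 3⟩

/-- Reduced trace `tr(x) = x + x̄ = 2·Re(x)`. -/
def qtr (x : Quaternion ℝ) : ℝ := 2 * x.re

/-- Reduced norm `N(x) = x·x̄ = a₀²+a₁²+a₂²+a₃²`. -/
def qN (x : Quaternion ℝ) : ℝ := x.re ^ 2 + x.imI ^ 2 + x.imJ ^ 2 + x.imK ^ 2

/-!
Completing the square, `exp (2πi·tr(αy) − 2π·N(y))` is a Gaussian in `y ∈ ℝ⁴` centred at the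
complex point `√−1·ᾱ`. The two entries of `(X₀,Y₀)·A(y)` are affine forms in `y` whose linear
parts `w₁, w₂ ∈ ℂ⁴` satisfy `wᵢ · wⱼ = 0`, so the derivative along `wⱼ` kills every polynomial
in these forms. Integrating by parts along `wⱼ` therefore shows that multiplying the integrand by
the `j`-th form multiplies the integral by the value of that form at the centre. By induction on
`P`, the integral is `P` evaluated at the centre times the mass `exp (−2π·N(α)) / 4` of the
Gaussian, and the factor `4` in the measure cancels the `1/4`.
-/

open Complex MvPolynomial Matrix Finset

section GaussianWeight

variable {ι : Type*} [Fintype ι]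

lemma sq_norm_le_sum_sq (a : ι → ℝ) : ‖a‖ ^ 2 ≤ ∑ j, a j ^ 2 := by
  have hsum : 0 ≤ ∑ j, a j ^ 2 := by positivity
  rw [← Real.sqrt_le_sqrt_iff hsum, Real.sqrt_sq (norm_nonneg a)]
  refine (pi_norm_le_iff_of_nonneg (Real.sqrt_nonneg _)).2 fun j => ?_
  rw [Real.norm_eq_abs, ← Real.sqrt_sq_eq_abs]
  exact Real.sqrt_le_sqrt (single_le_sum (fun k _ => sq_nonneg (a k)) (mem_univ j))

def gaussWeight (b : ℂ) (c : ι → ℂ) (a : ι → ℝ) : ℂ :=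
  cexp (-b * ∑ j, (a j : ℂ) ^ 2 + ∑ j, c j * a j)

lemma continuous_gaussWeight (b : ℂ) (c : ι → ℂ) : Continuous (gaussWeight b c) := by
  unfold gaussWeight
  fun_prop

lemma norm_gaussWeight (b : ℂ) (c : ι → ℂ) (a : ι → ℝ) :
    ‖gaussWeight b c a‖ = Real.exp (-b.re * ∑ j, a j ^ 2 + ∑ j, (c j).re * a j) := by
  rw [gaussWeight, norm_exp]
  congr 1
  simp [re_sum, ← ofReal_pow, ← ofReal_sum, mul_re]

lemma integral_gaussWeight {b : ℂ} (hb : 0 < b.re) (c : ι → ℂ) :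
    ∫ a, gaussWeight b c a
      = (Real.pi / b) ^ (Fintype.card ι / 2 : ℂ) * cexp ((∑ j, c j ^ 2) / (4 * b)) :=
  GaussianFourier.integral_cexp_neg_mul_sum_add hb c

lemma hasLineDerivAt_gaussWeight (b : ℂ) (c : ι → ℂ) (a v : ι → ℝ) :
    HasLineDerivAt ℝ (gaussWeight b c)
      (gaussWeight b c a * ∑ k, (c k - 2 * b * a k) * v k) a v := by
  have hcoord : ∀ j, HasDerivAt (fun t : ℝ => (((a + t • v) j : ℝ) : ℂ)) (v j) 0 := fun j => by
    simp only [Pi.add_apply, Pi.smul_apply, smul_eq_mul, ofReal_add, ofReal_mul]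
    simpa using ((hasDerivAt_id (0 : ℝ)).ofReal_comp.mul_const (v j : ℂ)).const_add (a j : ℂ)
  have hexponent : HasDerivAt
      (fun t : ℝ => -b * ∑ j, (((a + t • v) j : ℝ) : ℂ) ^ 2 + ∑ j, c j * ((a + t • v) j : ℝ))
      (∑ k, (c k - 2 * b * a k) * v k) 0 := by
    refine (((HasDerivAt.fun_sum fun j _ => (hcoord j).fun_pow 2).const_mul (-b)).add
      (HasDerivAt.fun_sum fun j _ => (hcoord j).const_mul (c j))).congr_deriv ?_
    rw [mul_sum, ← sum_add_distrib]
    exact sum_congr rfl fun k _ => by simp; ring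
  unfold HasLineDerivAt gaussWeight
  simpa using hexponent.cexp

end GaussianWeight

def ExpBounded {E : Type*} [Norm E] (f : E → ℂ) : Prop :=
  ∃ C K : ℝ, 0 ≤ C ∧ 0 ≤ K ∧ ∀ x, ‖f x‖ ≤ C * Real.exp (K * ‖x‖)

namespace ExpBounded

variable {E : Type*} [SeminormedAddCommGroup E] {f g : E → ℂ}

lemma const (z : ℂ) : ExpBounded fun _ : E => z :=
  ⟨‖z‖, 0, norm_nonneg z, le_rfl, fun x => by simp⟩

lemma add (hf : ExpBounded f) (hg : ExpBounded g) : ExpBounded fun x => f x + g x := by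
  obtain ⟨C, K, hC, hK, hfC⟩ := hf
  obtain ⟨D, L, hD, hL, hgD⟩ := hg
  refine ⟨C + D, K + L, add_nonneg hC hD, add_nonneg hK hL, fun x => ?_⟩
  calc ‖f x + g x‖ ≤ C * Real.exp (K * ‖x‖) + D * Real.exp (L * ‖x‖) :=
        (norm_add_le _ _).trans (add_le_add (hfC x) (hgD x))
    _ ≤ C * Real.exp ((K + L) * ‖x‖) + D * Real.exp ((K + L) * ‖x‖) := by
        gcongr <;> linarith
    _ = (C + D) * Real.exp ((K + L) * ‖x‖) := by ring

lemma mul (hf : ExpBounded f) (hg : ExpBounded g) : ExpBounded fun x => f x * g x := by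
  obtain ⟨C, K, hC, hK, hfC⟩ := hf
  obtain ⟨D, L, hD, hL, hgD⟩ := hg
  refine ⟨C * D, K + L, mul_nonneg hC hD, add_nonneg hK hL, fun x => ?_⟩
  calc ‖f x * g x‖ ≤ C * Real.exp (K * ‖x‖) * (D * Real.exp (L * ‖x‖)) := by
        rw [norm_mul]
        exact mul_le_mul (hfC x) (hgD x) (norm_nonneg _) (by positivity)
    _ = C * D * Real.exp ((K + L) * ‖x‖) := by rw [add_mul, Real.exp_add]; ring

end ExpBounded

section GaussianIntegrals

variable {ι σ : Type*} [Fintype ι]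

lemma expBounded_affine (f : ι → ℂ) (e : ℂ) :
    ExpBounded fun a : ι → ℝ => ∑ k, f k * a k + e := by
  refine ⟨∑ k, ‖f k‖ + ‖e‖, 1, by positivity, zero_le_one, fun a => ?_⟩
  have hnorm : ‖a‖ ≤ Real.exp (1 * ‖a‖) := by linarith [Real.add_one_le_exp (1 * ‖a‖)]
  have hone : 1 ≤ Real.exp (1 * ‖a‖) := Real.one_le_exp (by positivity)
  calc ‖∑ k, f k * a k + e‖ ≤ ∑ k, ‖f k‖ * ‖a‖ + ‖e‖ := by
        refine (norm_add_le _ _).trans (add_le_add_left ((norm_sum_le _ _).trans ?_) _)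
        refine sum_le_sum fun k _ => ?_
        rw [norm_mul, norm_real]
        exact mul_le_mul_of_nonneg_left (norm_le_pi_norm a k) (norm_nonneg _)
    _ ≤ ∑ k, ‖f k‖ * Real.exp (1 * ‖a‖) + ‖e‖ * Real.exp (1 * ‖a‖) := by
        gcongr
        · exact le_mul_of_one_le_right (norm_nonneg e) hone
    _ = (∑ k, ‖f k‖ + ‖e‖) * Real.exp (1 * ‖a‖) := by rw [add_mul, sum_mul]

lemma ExpBounded.integrable_gaussWeight_mul {b : ℂ} (hb : 0 < b.re) (c : ι → ℂ)
    {f : (ι → ℝ) → ℂ} (hf : ExpBounded f) (hfm : AEStronglyMeasurable f) :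
    Integrable fun a => gaussWeight b c a * f a := by
  obtain ⟨C, K, hC, -, hfC⟩ := hf
  -- half of the Gaussian decay absorbs `exp (K * ‖a‖)`
  have hdom : Integrable fun a =>
      C * Real.exp (K ^ 2 / (2 * b.re)) * ‖gaussWeight (b / 2) c a‖ :=
    (GaussianFourier.integrable_cexp_neg_mul_sum_add (by simpa using hb) c).norm.const_mul _
  refine hdom.mono' ?_ (Filter.Eventually.of_forall fun a => ?_)
  · exact (continuous_gaussWeight b c).aestronglyMeasurable.mul hfm
  · have hsq := sq_norm_le_sum_sq a
    have hexp : K * ‖a‖ - b.re / 2 * ∑ j, a j ^ 2 ≤ K ^ 2 / (2 * b.re) := by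
      rw [le_div_iff₀ (by positivity)]
      nlinarith [sq_nonneg (K - b.re * ‖a‖), mul_le_mul_of_nonneg_left hsq hb.le]
    rw [norm_mul, norm_gaussWeight, norm_gaussWeight]
    calc Real.exp (-b.re * ∑ j, a j ^ 2 + ∑ j, (c j).re * a j) * ‖f a‖
        ≤ Real.exp (-b.re * ∑ j, a j ^ 2 + ∑ j, (c j).re * a j) * (C * Real.exp (K * ‖a‖)) :=
          mul_le_mul_of_nonneg_left (hfC a) (Real.exp_pos _).le
      _ = C * Real.exp (K * ‖a‖ - b.re / 2 * ∑ j, a j ^ 2) *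
            Real.exp (-(b / 2).re * ∑ j, a j ^ 2 + ∑ j, (c j).re * a j) := by
          rw [mul_left_comm, mul_assoc, ← Real.exp_add, ← Real.exp_add, div_ofNat_re]
          ring_nf
      _ ≤ _ := by gcongr

def dirDerivation (y : σ → ℂ) : Derivation ℂ (MvPolynomial σ ℂ) (MvPolynomial σ ℂ) :=
  mkDerivation ℂ fun i => C (y i)

@[simp]
lemma dirDerivation_X (y : σ → ℂ) (i : σ) : dirDerivation y (X i) = C (y i) :=
  mkDerivation_X ℂ _ i

lemma dirDerivation_zero : dirDerivation (0 : σ → ℂ) = 0 :=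
  derivation_ext fun i => by simp

lemma dirDerivation_add_smul (y z : σ → ℂ) (r : ℂ) :
    dirDerivation (y + r • z) = dirDerivation y + r • dirDerivation z :=
  derivation_ext fun i => by simp [smul_eq_C_mul]

lemma hasDerivAt_eval_add_smul (p : MvPolynomial σ ℂ) (z y : σ → ℂ) (s : ℂ) :
    HasDerivAt (fun s : ℂ => eval (z + s • y) p) (eval (z + s • y) (dirDerivation y p)) s := by
  induction p using MvPolynomial.induction_on with
  | C a => simpa [dirDerivation, derivation_C] using hasDerivAt_const s a
  | add p q hp hq => simp only [map_add]; exact hp.add hq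
  | mul_X p i hp =>
    have hXi : HasDerivAt (fun s : ℂ => z i + s * y i) (y i) s := by
      simpa using ((hasDerivAt_id s).mul_const (y i)).const_add (z i)
    simp only [map_mul, eval_X, Pi.add_apply, Pi.smul_apply, smul_eq_mul, Derivation.leibniz,
      dirDerivation_X, map_add, eval_C]
    exact (hp.mul hXi).congr_deriv (by ring)

lemma hasLineDerivAt_eval_affine (W : Matrix σ ι ℂ) (d : σ → ℂ) (p : MvPolynomial σ ℂ)
    (a v : ι → ℝ) :
    HasLineDerivAt ℝ (fun a => eval (W *ᵥ (ofReal ∘ a) + d) p)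
      (eval (W *ᵥ (ofReal ∘ a) + d) (dirDerivation (W *ᵥ (ofReal ∘ v)) p)) a v := by
  have hline : ∀ t : ℝ, W *ᵥ (ofReal ∘ (a + t • v)) + d
      = W *ᵥ (ofReal ∘ a) + d + (t : ℂ) • W *ᵥ (ofReal ∘ v) := fun t => by
    ext i
    simp only [mulVec, dotProduct, Function.comp_apply, Pi.add_apply, Pi.smul_apply,
      smul_eq_mul, ofReal_add, ofReal_mul, mul_add, sum_add_distrib, mul_sum]
    rw [add_right_comm]
    exact congrArg _ (sum_congr rfl fun k _ => by ring)
  have h := (hasDerivAt_eval_add_smul p (W *ᵥ (ofReal ∘ a) + d) (W *ᵥ (ofReal ∘ v))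
    ((0 : ℝ) : ℂ)).comp_ofReal
  simp only [HasLineDerivAt, hline]
  simpa using h

lemma expBounded_eval_affine (W : Matrix σ ι ℂ) (d : σ → ℂ) (p : MvPolynomial σ ℂ) :
    ExpBounded fun a : ι → ℝ => eval (W *ᵥ (ofReal ∘ a) + d) p := by
  induction p using MvPolynomial.induction_on with
  | C z => simpa using ExpBounded.const z
  | add p q hp hq => simpa using hp.add hq
  | mul_X p i hp => simpa [mulVec, dotProduct] using hp.mul (expBounded_affine (W i) (d i))

lemma continuous_eval_affine (W : Matrix σ ι ℂ) (d : σ → ℂ) (p : MvPolynomial σ ℂ) :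
    Continuous fun a : ι → ℝ => eval (W *ᵥ (ofReal ∘ a) + d) p :=
  (continuous_eval p).comp (by fun_prop)

lemma integrable_gaussWeight_mul_eval {b : ℂ} (hb : 0 < b.re) (c : ι → ℂ) (W : Matrix σ ι ℂ)
    (d : σ → ℂ) (p : MvPolynomial σ ℂ) :
    Integrable fun a => gaussWeight b c a * eval (W *ᵥ (ofReal ∘ a) + d) p :=
  (expBounded_eval_affine W d p).integrable_gaussWeight_mul hb c
    (continuous_eval_affine W d p).aestronglyMeasurable

lemma integrable_gaussWeight_mul_affine_mul_eval {b : ℂ} (hb : 0 < b.re) (c : ι → ℂ)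
    (W : Matrix σ ι ℂ) (d : σ → ℂ) (p : MvPolynomial σ ℂ) (y : ι → ℂ) :
    Integrable fun a => gaussWeight b c a * (∑ k, (c k - 2 * b * a k) * y k) *
      eval (W *ᵥ (ofReal ∘ a) + d) p := by
  have haffine : ExpBounded fun a : ι → ℝ => ∑ k, (c k - 2 * b * a k) * y k := by
    convert expBounded_affine (fun k => -(2 * b * y k)) (∑ k, c k * y k) using 2 with a
    rw [← sum_add_distrib]
    exact sum_congr rfl fun k _ => by ring
  have hcont : Continuous fun a : ι → ℝ => ∑ k, (c k - 2 * b * a k) * y k := by fun_prop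
  simpa [mul_assoc] using (haffine.mul (expBounded_eval_affine W d p)).integrable_gaussWeight_mul
    hb c (hcont.mul (continuous_eval_affine W d p)).aestronglyMeasurable

lemma integral_gaussWeight_mul_eval_dirDerivation_ofReal {b : ℂ} (hb : 0 < b.re) (c : ι → ℂ)
    (W : Matrix σ ι ℂ) (d : σ → ℂ) (p : MvPolynomial σ ℂ) (v : ι → ℝ) :
    ∫ a, gaussWeight b c a * eval (W *ᵥ (ofReal ∘ a) + d) (dirDerivation (W *ᵥ (ofReal ∘ v)) p)
      = -∫ a, gaussWeight b c a * (∑ k, (c k - 2 * b * a k) * v k) *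
          eval (W *ᵥ (ofReal ∘ a) + d) p :=
  integral_bilinear_hasLineDerivAt_right_eq_neg_left_of_integrable
    (B := ContinuousLinearMap.mul ℝ ℂ)
    (integrable_gaussWeight_mul_affine_mul_eval hb c W d p (ofReal ∘ v))
    (integrable_gaussWeight_mul_eval hb c W d _) (integrable_gaussWeight_mul_eval hb c W d p)
    (fun a _ => hasLineDerivAt_gaussWeight b c a v)
    (fun a _ => hasLineDerivAt_eval_affine W d p a v)

lemma integral_gaussWeight_mul_eval_dirDerivation {b : ℂ} (hb : 0 < b.re) (c : ι → ℂ)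
    (W : Matrix σ ι ℂ) (d : σ → ℂ) (p : MvPolynomial σ ℂ) (y : ι → ℂ) :
    ∫ a, gaussWeight b c a * eval (W *ᵥ (ofReal ∘ a) + d) (dirDerivation (W *ᵥ y) p)
      = -∫ a, gaussWeight b c a * (∑ k, (c k - 2 * b * a k) * y k) *
          eval (W *ᵥ (ofReal ∘ a) + d) p := by
  set yr : ι → ℝ := fun k => (y k).re
  set yi : ι → ℝ := fun k => (y k).im
  have hy : W *ᵥ y = W *ᵥ (ofReal ∘ yr) + I • W *ᵥ (ofReal ∘ yi) := by
    rw [← mulVec_smul, ← mulVec_add]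
    congr 1
    ext k
    simp [yr, yi, mul_comm I, re_add_im]
  have haffine : ∀ a : ι → ℝ, ∑ k, (c k - 2 * b * a k) * y k
      = ∑ k, (c k - 2 * b * a k) * yr k + I * ∑ k, (c k - 2 * b * a k) * yi k := fun a => by
    rw [mul_sum, ← sum_add_distrib]
    exact sum_congr rfl fun k _ => by
      conv_lhs => rw [← re_add_im (y k)]
      ring
  have hL : ∫ a, gaussWeight b c a * eval (W *ᵥ (ofReal ∘ a) + d) (dirDerivation (W *ᵥ y) p)
      = (∫ a, gaussWeight b c a *
          eval (W *ᵥ (ofReal ∘ a) + d) (dirDerivation (W *ᵥ (ofReal ∘ yr)) p)) +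
        I * ∫ a, gaussWeight b c a *
          eval (W *ᵥ (ofReal ∘ a) + d) (dirDerivation (W *ᵥ (ofReal ∘ yi)) p) := by
    rw [← integral_const_mul, ← integral_add (integrable_gaussWeight_mul_eval hb c W d _)
      ((integrable_gaussWeight_mul_eval hb c W d _).const_mul I)]
    refine integral_congr_ae (Filter.Eventually.of_forall fun a => ?_)
    simp only [hy, dirDerivation_add_smul, Derivation.add_apply, Derivation.smul_apply, map_add,
      smul_eval]
    ring
  have hR : ∫ a, gaussWeight b c a * (∑ k, (c k - 2 * b * a k) * y k) *
        eval (W *ᵥ (ofReal ∘ a) + d) p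
      = (∫ a, gaussWeight b c a * (∑ k, (c k - 2 * b * a k) * yr k) *
          eval (W *ᵥ (ofReal ∘ a) + d) p) +
        I * ∫ a, gaussWeight b c a * (∑ k, (c k - 2 * b * a k) * yi k) *
          eval (W *ᵥ (ofReal ∘ a) + d) p := by
    have hr : Integrable fun a => gaussWeight b c a * (∑ k, (c k - 2 * b * a k) * yr k) *
        eval (W *ᵥ (ofReal ∘ a) + d) p :=
      integrable_gaussWeight_mul_affine_mul_eval hb c W d p (ofReal ∘ yr)
    have hi : Integrable fun a => gaussWeight b c a * (∑ k, (c k - 2 * b * a k) * yi k) *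
        eval (W *ᵥ (ofReal ∘ a) + d) p :=
      integrable_gaussWeight_mul_affine_mul_eval hb c W d p (ofReal ∘ yi)
    rw [← integral_const_mul, ← integral_add hr (hi.const_mul I)]
    refine integral_congr_ae (Filter.Eventually.of_forall fun a => ?_)
    simp only [haffine]
    ring
  rw [hL, hR, integral_gaussWeight_mul_eval_dirDerivation_ofReal hb,
    integral_gaussWeight_mul_eval_dirDerivation_ofReal hb]
  ring

lemma integral_gaussWeight_mul_eval_mul_X {b : ℂ} (hb : 0 < b.re) (c : ι → ℂ)
    (W : Matrix σ ι ℂ) (d : σ → ℂ) (hW : W * Wᵀ = 0) (p : MvPolynomial σ ℂ) (j : σ) :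
    ∫ a, gaussWeight b c a * eval (W *ᵥ (ofReal ∘ a) + d) (p * X j)
      = (W *ᵥ ((2 * b)⁻¹ • c) + d) j *
          ∫ a, gaussWeight b c a * eval (W *ᵥ (ofReal ∘ a) + d) p := by
  have hb0 : b ≠ 0 := fun h => by simp [h] at hb
  have hrow : W *ᵥ W j = 0 := by
    ext i
    simpa [Matrix.mul_apply, mulVec, dotProduct] using congrFun (congrFun hW i) j
  have hvanish : ∫ a, gaussWeight b c a * (∑ k, (c k - 2 * b * a k) * W j k) *
      eval (W *ᵥ (ofReal ∘ a) + d) p = 0 := by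
    simpa [hrow, dirDerivation_zero] using
      (integral_gaussWeight_mul_eval_dirDerivation hb c W d p (W j)).symm
  have hform : ∀ a : ι → ℝ, (W *ᵥ (ofReal ∘ a) + d) j
      = (W *ᵥ ((2 * b)⁻¹ • c) + d) j - (2 * b)⁻¹ * ∑ k, (c k - 2 * b * a k) * W j k :=
    fun a => by
      simp only [Pi.add_apply, mulVec, dotProduct, Pi.smul_apply, smul_eq_mul,
        Function.comp_apply, mul_sum, add_sub_right_comm, ← sum_sub_distrib]
      congr 1
      exact sum_congr rfl fun k _ => by field_simp; ring
  calc _ = ∫ a, (W *ᵥ ((2 * b)⁻¹ • c) + d) j *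
          (gaussWeight b c a * eval (W *ᵥ (ofReal ∘ a) + d) p) -
        (2 * b)⁻¹ * (gaussWeight b c a * (∑ k, (c k - 2 * b * a k) * W j k) *
          eval (W *ᵥ (ofReal ∘ a) + d) p) := by
        refine integral_congr_ae (Filter.Eventually.of_forall fun a => ?_)
        simp only [map_mul, eval_X, hform a]
        ring
    _ = _ := by
        rw [integral_sub ((integrable_gaussWeight_mul_eval hb c W d p).const_mul _)
          ((integrable_gaussWeight_mul_affine_mul_eval hb c W d p (W j)).const_mul _),
          integral_const_mul, integral_const_mul, hvanish, mul_zero, sub_zero]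

theorem integral_gaussWeight_mul_eval {b : ℂ} (hb : 0 < b.re) (c : ι → ℂ)
    (W : Matrix σ ι ℂ) (d : σ → ℂ) (hW : W * Wᵀ = 0) (P : MvPolynomial σ ℂ) :
    ∫ a, gaussWeight b c a * eval (W *ᵥ (ofReal ∘ a) + d) P
      = eval (W *ᵥ ((2 * b)⁻¹ • c) + d) P * ∫ a, gaussWeight b c a := by
  induction P using MvPolynomial.induction_on with
  | C z => simp only [eval_C, mul_comm _ z, integral_const_mul]
  | add p q hp hq =>
    simp only [map_add, mul_add, add_mul]
    rw [integral_add (integrable_gaussWeight_mul_eval hb c W d p)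
      (integrable_gaussWeight_mul_eval hb c W d q), hp, hq]
  | mul_X p j hp =>
    rw [integral_gaussWeight_mul_eval_mul_X hb c W d hW, hp, map_mul, eval_X]
    ring

end GaussianIntegrals

section Quaternion

def quatCoords (q : Quaternion ℝ) : Fin 4 → ℝ := ![q.re, q.imI, q.imJ, q.imK]

lemma quatOf_quatCoords (q : Quaternion ℝ) : quatOf (quatCoords q) = q := rfl

lemma Amap_add (q r : Quaternion ℝ) : Amap (q + r) = Amap q + Amap r := by
  ext i j
  fin_cases i <;> fin_cases j <;> simp [Amap] <;> ring

def vecMulAmapMatrix (v : Fin 2 → ℂ) : Matrix (Fin 2) (Fin 4) ℂ :=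
  !![v 0, v 0 * I, -v 1, v 1 * I; v 1, -(v 1 * I), v 0, v 0 * I]

lemma vecMul_Amap_quatOf (v : Fin 2 → ℂ) (a : Fin 4 → ℝ) :
    v ᵥ* Amap (quatOf a) = vecMulAmapMatrix v *ᵥ (ofReal ∘ a) := by
  ext i
  fin_cases i <;> simp [Amap, quatOf, vecMulAmapMatrix, vecMul, mulVec, dotProduct,
    Fin.sum_univ_two, Fin.sum_univ_four] <;> ring

lemma vecMulAmapMatrix_mul_transpose (v : Fin 2 → ℂ) :
    vecMulAmapMatrix v * (vecMulAmapMatrix v)ᵀ = 0 := by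
  ext i j
  fin_cases i <;> fin_cases j <;>
    simp [vecMulAmapMatrix, Matrix.mul_apply, Fin.sum_univ_four] <;> ring_nf <;> simp [I_sq]

lemma exp_qtr_mul_exp_qN (α : Quaternion ℝ) (a : Fin 4 → ℝ) :
    cexp (2 * (Real.pi : ℂ) * I * ((qtr (α * quatOf a) : ℝ) : ℂ)) *
        cexp (-(2 * (Real.pi : ℂ)) * ((qN (quatOf a) : ℝ) : ℂ))
      = gaussWeight (2 * Real.pi) (fun j => 4 * Real.pi * I * quatCoords (star α) j) a := by
  rw [gaussWeight, ← Complex.exp_add]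
  congr 1
  rw [qtr, Quaternion.re_mul]
  simp [qN, quatOf, quatCoords, Fin.sum_univ_four]
  ring

lemma integral_gaussWeight_quatCoords_star (α : Quaternion ℝ) :
    ∫ a, gaussWeight (2 * Real.pi) (fun j => 4 * Real.pi * I * quatCoords (star α) j) a
      = cexp (-(2 * (Real.pi : ℂ)) * qN α) / 4 := by
  have hb : 0 < (2 * (Real.pi : ℂ)).re := by simp [Real.pi_pos]
  have hcard : (Fintype.card (Fin 4) / 2 : ℂ) = (2 : ℕ) := by norm_num
  have hhalf : (Real.pi : ℂ) / (2 * Real.pi) = 1 / 2 := by field_simp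
  rw [integral_gaussWeight hb, hcard, cpow_natCast, hhalf, mul_comm, div_eq_mul_inv]
  congr 1
  · congr 1
    simp only [quatCoords, qN, Fin.sum_univ_four, Matrix.cons_val, Quaternion.re_star,
      Quaternion.imI_star, Quaternion.imJ_star, Quaternion.imK_star]
    field_simp
    push_cast
    linear_combination (4 * ((α.re : ℂ) ^ 2 + α.imI ^ 2 + α.imJ ^ 2 + α.imK ^ 2)) * I_sq
  · norm_num

lemma inv_smul_quatCoords (q : Quaternion ℝ) :
    (2 * (2 * Real.pi : ℂ))⁻¹ • (fun j => 4 * Real.pi * I * quatCoords q j)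
      = I • (ofReal ∘ quatCoords q) := by
  ext j
  simp only [Pi.smul_apply, Function.comp_apply, smul_eq_mul]
  field_simp
  ring

end Quaternion

theorem stmt0_general (α β : Quaternion ℝ)
    (P : MvPolynomial (Fin 2) ℂ) (X₀ Y₀ : ℂ) :
    (∫ a : Fin 4 → ℝ,
        Complex.exp (2 * (Real.pi : ℂ) * Complex.I * ((qtr (α * quatOf a) : ℝ) : ℂ))
          * Complex.exp (-(2 * (Real.pi : ℂ)) * ((qN (quatOf a) : ℝ) : ℂ))
          * MvPolynomial.eval (Matrix.vecMul ![X₀, Y₀] (Amap (quatOf a + β))) P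
        ∂((4 : ℝ≥0∞) • volume))
      = Complex.exp (-(2 * (Real.pi : ℂ)) * ((qN α : ℝ) : ℂ))
          * MvPolynomial.eval
              (Matrix.vecMul ![X₀, Y₀] (Complex.I • Amap (star α) + Amap β)) P := by
  set v : Fin 2 → ℂ := ![X₀, Y₀]
  have hb : 0 < (2 * (Real.pi : ℂ)).re := by simp [Real.pi_pos]
  have hintegrand (a : Fin 4 → ℝ) :
      cexp (2 * (Real.pi : ℂ) * I * ((qtr (α * quatOf a) : ℝ) : ℂ)) *
          cexp (-(2 * (Real.pi : ℂ)) * ((qN (quatOf a) : ℝ) : ℂ)) *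
          eval (v ᵥ* Amap (quatOf a + β)) P
        = gaussWeight (2 * Real.pi) (fun j => 4 * Real.pi * I * quatCoords (star α) j) a *
            eval (vecMulAmapMatrix v *ᵥ (ofReal ∘ a) + v ᵥ* Amap β) P := by
    rw [exp_qtr_mul_exp_qN, Amap_add, vecMul_add, vecMul_Amap_quatOf]
  rw [integral_smul_measure, integral_congr_ae (Filter.Eventually.of_forall hintegrand),
    integral_gaussWeight_mul_eval hb _ _ _ (vecMulAmapMatrix_mul_transpose v),
    integral_gaussWeight_quatCoords_star, inv_smul_quatCoords, mulVec_smul,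
    ← vecMul_Amap_quatOf, quatOf_quatCoords, ← vecMul_smul, ← vecMul_add]
  norm_num
  ring

/-- for a positive integer κ, quaternions α, β, a homogeneous polynomial P of
degree κ and (X₀,Y₀) ∈ ℂ²,
`∫_ℍ exp(2πi·tr(αy))·exp(−2π·N(y))·P((X₀,Y₀)·A(y+β)) dy
  = exp(−2π·N(α))·P((X₀,Y₀)·(√−1·A(ᾱ)+A(β)))`,
where the measure on ℍ ≅ ℝ⁴ is 4 times Lebesgue measure. -/
theorem stmt0 (κ : ℕ) (hκ : 0 < κ) (α β : Quaternion ℝ)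
    (P : MvPolynomial (Fin 2) ℂ) (hP : P.IsHomogeneous κ) (X₀ Y₀ : ℂ) :
    (∫ a : Fin 4 → ℝ,
        Complex.exp (2 * (Real.pi : ℂ) * Complex.I * ((qtr (α * quatOf a) : ℝ) : ℂ))
          * Complex.exp (-(2 * (Real.pi : ℂ)) * ((qN (quatOf a) : ℝ) : ℂ))
          * MvPolynomial.eval (Matrix.vecMul ![X₀, Y₀] (Amap (quatOf a + β))) P
        ∂((4 : ℝ≥0∞) • volume))
      = Complex.exp (-(2 * (Real.pi : ℂ)) * ((qN α : ℝ) : ℂ))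
          * MvPolynomial.eval
              (Matrix.vecMul ![X₀, Y₀] (Complex.I • Amap (star α) + Amap β)) P :=
  stmt0_general α β P X₀ Y₀
end
end

section
/- Let κ ≥ 2 be an integer and let s, t ∈ ℝ with t > 0. Then ∫_ℝ (t+√−1·x)^{−κ}·exp(2πi·sx) dx equals (2π)^κ/(κ−1)! · s^{κ−1} · exp(−2π·s·t) if s > 0, and equals 0 if s ≤ 0. -/
/-!
The integrand is, up to the factor `(2π)^κ / (κ-1)!`, the Fourier transform of the one-sided
function `g(u) = u^(κ-1) e^(-2πtu) 1_{u>0}`: this is the Gamma integral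
`∫_0^∞ u^n e^(-zu) du = n! / z^(n+1)` at the complex rate `z = 2π(t + ix)`, proved by integration
by parts. For `κ ≥ 2` the function `g` is continuous and `|t + ix|^(-κ)` is integrable, so Fourier
inversion evaluates the integral to the factor times `g(s)`.
-/

open MeasureTheory Set Filter Topology FourierTransform Complex
open scoped Real

variable {z : ℂ}

lemma norm_pow_mul_cexp_neg_mul (n : ℕ) (z : ℂ) {u : ℝ} (hu : 0 ≤ u) :
    ‖(u : ℂ) ^ n * cexp (-(z * u))‖ = u ^ n * rexp (-(z.re * u)) := by
  rw [norm_mul, norm_pow, norm_exp, norm_real, Real.norm_of_nonneg hu]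
  simp

lemma tendsto_pow_mul_cexp_neg_mul_atTop (n : ℕ) (hz : 0 < z.re) :
    Tendsto (fun u : ℝ => (u : ℂ) ^ n * cexp (-(z * u))) atTop (𝓝 0) := by
  rw [tendsto_zero_iff_norm_tendsto_zero]
  refine (tendsto_rpow_mul_exp_neg_mul_atTop_nhds_zero n z.re hz).congr' ?_
  filter_upwards [eventually_ge_atTop 0] with u hu
  rw [norm_pow_mul_cexp_neg_mul n z hu, Real.rpow_natCast, neg_mul]

lemma integrableOn_pow_mul_cexp_neg_mul_Ioi (n : ℕ) (hz : 0 < z.re) :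
    IntegrableOn (fun u : ℝ => (u : ℂ) ^ n * cexp (-(z * u))) (Ioi 0) := by
  have hreal := integrableOn_rpow_mul_exp_neg_mul_rpow (s := n) (p := 1)
    (by linarith [n.cast_nonneg (α := ℝ)]) one_pos hz
  refine hreal.mono' (by fun_prop)
    ((ae_restrict_iff' measurableSet_Ioi).mpr (ae_of_all _ fun u hu => ?_))
  rw [norm_pow_mul_cexp_neg_mul n z (le_of_lt hu), Real.rpow_natCast, Real.rpow_one, neg_mul]

lemma mul_integral_pow_succ_mul_cexp_neg_mul_Ioi (n : ℕ) (hz : 0 < z.re) :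
    z * ∫ u in Ioi (0 : ℝ), (u : ℂ) ^ (n + 1) * cexp (-(z * u))
      = (n + 1) * ∫ u in Ioi (0 : ℝ), (u : ℂ) ^ n * cexp (-(z * u)) := by
  have hIn := integrableOn_pow_mul_cexp_neg_mul_Ioi n hz
  have hIn1 := integrableOn_pow_mul_cexp_neg_mul_Ioi (n + 1) hz
  have hderiv (u : ℝ) : HasDerivAt (fun v : ℝ => (v : ℂ) ^ (n + 1) * cexp (-(z * v)))
      ((n + 1) * ((u : ℂ) ^ n * cexp (-(z * u)))
        - z * ((u : ℂ) ^ (n + 1) * cexp (-(z * u)))) u := by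
    have hpow : HasDerivAt (fun v : ℝ => (v : ℂ) ^ (n + 1)) ((n + 1) * (u : ℂ) ^ n) u := by
      simpa using (hasDerivAt_pow (n + 1) (u : ℂ)).comp_ofReal
    have hexp : HasDerivAt (fun v : ℝ => cexp (-(z * v))) (cexp (-(z * u)) * -z) u := by
      simpa using ((hasDerivAt_id u).ofReal_comp.const_mul z).neg.cexp
    exact (hpow.mul hexp).congr_deriv (by ring)
  have hFTC := integral_Ioi_of_hasDerivAt_of_tendsto' (fun u _ => hderiv u)
    ((hIn.const_mul _).sub (hIn1.const_mul _)) (tendsto_pow_mul_cexp_neg_mul_atTop (n + 1) hz)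
  rw [integral_sub (hIn.const_mul _) (hIn1.const_mul _), integral_const_mul,
    integral_const_mul] at hFTC
  simp only [ofReal_zero, ne_eq, Nat.add_one_ne_zero, not_false_eq_true, zero_pow, zero_mul,
    sub_zero] at hFTC
  linear_combination -hFTC

lemma integral_pow_mul_cexp_neg_mul_Ioi (n : ℕ) (hz : 0 < z.re) :
    ∫ u in Ioi (0 : ℝ), (u : ℂ) ^ n * cexp (-(z * u)) = n.factorial / z ^ (n + 1) := by
  have hz0 : z ≠ 0 := by rintro rfl; simp at hz
  induction n with
  | zero =>
    simp_rw [pow_zero, one_mul, ← neg_mul]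
    rw [integral_exp_mul_complex_Ioi (by simpa using hz)]
    simp [neg_div]
  | succ n ih =>
    have h := mul_integral_pow_succ_mul_cexp_neg_mul_Ioi n hz
    rw [ih, mul_div_assoc', eq_div_iff (pow_ne_zero _ hz0)] at h
    rw [eq_div_iff (pow_ne_zero _ hz0), Nat.factorial_succ]
    push_cast
    linear_combination h

lemma one_add_sq_le_norm_one_add_mul_I_pow (y : ℝ) {n : ℕ} (hn : 2 ≤ n) :
    1 + y ^ 2 ≤ ‖1 + y * I‖ ^ n := by
  have hsq : ‖1 + y * I‖ ^ 2 = 1 + y ^ 2 := by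
    rw [Complex.sq_norm, ← ofReal_one, normSq_add_mul_I, one_pow]
  have hone : 1 ≤ ‖1 + y * I‖ := by
    nlinarith [norm_nonneg (1 + y * I), sq_nonneg y]
  exact hsq ▸ pow_le_pow_right₀ hone hn

lemma integrable_inv_ofReal_add_I_mul_pow {t : ℝ} (ht : 0 < t) {n : ℕ} (hn : 2 ≤ n) :
    Integrable fun x : ℝ => (((t : ℂ) + I * x) ^ n)⁻¹ := by
  refine ((integrable_inv_one_add_sq.comp_div ht.ne').const_mul (t ^ n)⁻¹).mono'
    (by fun_prop) (ae_of_all _ fun x => ?_)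
  have hfactor : (t : ℂ) + I * x = t * (1 + ↑(x / t) * I) := by
    have : (t : ℂ) ≠ 0 := ofReal_ne_zero.mpr ht.ne'
    push_cast
    field_simp
  rw [hfactor, norm_inv, mul_pow, norm_mul, norm_pow, norm_pow, norm_real,
    Real.norm_of_nonneg ht.le, mul_inv]
  gcongr
  exact one_add_sq_le_norm_one_add_mul_I_pow _ hn

noncomputable def gammaKernel (n : ℕ) (z : ℂ) : ℝ → ℂ :=
  (Ioi 0).indicator fun u => (u : ℂ) ^ n * cexp (-(z * u))

lemma integrable_gammaKernel (n : ℕ) (hz : 0 < z.re) : Integrable (gammaKernel n z) :=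
  (integrableOn_pow_mul_cexp_neg_mul_Ioi n hz).integrable_indicator measurableSet_Ioi

lemma continuous_gammaKernel {n : ℕ} (hn : n ≠ 0) (z : ℂ) : Continuous (gammaKernel n z) := by
  have hmax : gammaKernel n z = fun u => ((max u 0 : ℝ) : ℂ) ^ n * cexp (-(z * u)) := by
    ext u
    rcases lt_or_ge 0 u with hu | hu
    · simp [gammaKernel, hu, hu.le]
    · simp [gammaKernel, hu, not_lt.mpr hu, zero_pow hn]
  rw [hmax]
  fun_prop

lemma fourier_gammaKernel (n : ℕ) (hz : 0 < z.re) (x : ℝ) :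
    𝓕 (gammaKernel n z) x = n.factorial / (z + 2 * π * I * x) ^ (n + 1) := by
  have hre : 0 < (z + 2 * π * I * x).re := by simpa using hz
  rw [Real.fourier_real_eq_integral_exp_smul, ← integral_pow_mul_cexp_neg_mul_Ioi n hre,
    ← integral_indicator measurableSet_Ioi]
  congr 1
  ext u
  by_cases hu : u ∈ Ioi 0
  · simp only [gammaKernel, indicator_of_mem hu, smul_eq_mul]
    rw [mul_left_comm, ← Complex.exp_add]
    push_cast
    ring_nf
  · simp [gammaKernel, indicator_of_notMem hu]

theorem integral_inv_add_two_pi_I_mul_pow_mul_cexp {n : ℕ} (hn : n ≠ 0) (hz : 0 < z.re) (s : ℝ) :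
    ∫ x : ℝ, ((z + 2 * π * I * x) ^ (n + 1))⁻¹ * cexp (2 * π * I * s * x)
      = gammaKernel n z s / n.factorial := by
  have hfact : (n.factorial : ℂ) ≠ 0 := by exact_mod_cast n.factorial_ne_zero
  have hF : 𝓕 (gammaKernel n z)
      = fun x : ℝ => n.factorial * ((z + 2 * π * I * x) ^ (n + 1))⁻¹ := by
    ext x
    rw [fourier_gammaKernel n hz, div_eq_mul_inv]
  have hFint : Integrable (𝓕 (gammaKernel n z)) := by
    have hshift (x : ℝ) : z + 2 * π * I * x = z.re + I * ↑(2 * π * x + z.im) := by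
      apply Complex.ext <;> simp [add_comm]
    rw [hF]
    simp_rw [hshift]
    exact (((integrable_inv_ofReal_add_I_mul_pow hz (by omega)).comp_add_right z.im).comp_mul_left'
      (by positivity)).const_mul _
  have hinv := (integrable_gammaKernel n hz).fourierInv_fourier_eq hFint
    (continuous_gammaKernel hn z).continuousAt (v := s)
  rw [eq_div_iff hfact, ← hinv, hF, Real.fourierInv_eq', ← integral_mul_const]
  congr 1
  ext x
  simp only [smul_eq_mul, RCLike.inner_apply, conj_trivial]
  push_cast
  ring_nf

/-- for an integer κ ≥ 2 and s, t ∈ ℝ with t > 0,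
`∫_ℝ (t+√−1·x)^{−κ}·exp(2πi·sx) dx` equals `(2π)^κ/(κ−1)!·s^{κ−1}·exp(−2π·s·t)` if s > 0,
and equals 0 if s ≤ 0. -/
theorem stmt1 (κ : ℕ) (hκ : 2 ≤ κ) (s t : ℝ) (ht : 0 < t) :
    (∫ x : ℝ, ((t : ℂ) + Complex.I * (x : ℂ)) ^ (-(κ : ℤ))
        * Complex.exp (2 * (Real.pi : ℂ) * Complex.I * ((s * x : ℝ) : ℂ)))
      = if 0 < s then
          (2 * (Real.pi : ℂ)) ^ κ / (Nat.factorial (κ - 1) : ℂ) * ((s : ℂ)) ^ (κ - 1)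
            * Complex.exp (-(2 * (Real.pi : ℂ)) * ((s * t : ℝ) : ℂ))
        else 0 := by
  obtain ⟨n, rfl⟩ : ∃ n, κ = n + 1 := ⟨κ - 1, by omega⟩
  have h2π : (2 * π : ℂ) ≠ 0 := by exact_mod_cast Real.two_pi_pos.ne'
  have hz : 0 < (2 * π * t : ℂ).re := by simpa using mul_pos Real.two_pi_pos ht
  have hintegrand : (fun x : ℝ => ((t : ℂ) + I * x) ^ (-((n + 1 : ℕ) : ℤ))
        * cexp (2 * π * I * ((s * x : ℝ) : ℂ)))
      = fun x : ℝ => (2 * π) ^ (n + 1)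
        * (((2 * π * t + 2 * π * I * x) ^ (n + 1))⁻¹ * cexp (2 * π * I * s * x)) := by
    ext x
    rw [show (2 * π * t + 2 * π * I * x : ℂ) = 2 * π * (t + I * x) by ring,
      mul_pow (2 * π : ℂ), mul_inv, zpow_neg, zpow_natCast, ← mul_assoc, ← mul_assoc,
      mul_inv_cancel₀ (pow_ne_zero _ h2π), one_mul]
    push_cast
    ring_nf
  rw [hintegrand, integral_const_mul, integral_inv_add_two_pi_I_mul_pow_mul_cexp (by omega) hz s]
  simp only [gammaKernel, indicator, mem_Ioi, Nat.add_sub_cancel]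
  split_ifs
  · push_cast
    ring_nf
  · simp
end

section
/- Let x₁, x₂ ∈ ℍ be quaternions such that x̄₁x₂ = s − t·i for some real numbers s and t with t ≥ 0 (i.e., the j- and k-components of x̄₁x₂ vanish, s is its real part, and −t is its i-component). Then t ≤ (N(x₁)+N(x₂))/2; moreover, if t = (N(x₁)+N(x₂))/2 then x₂ = −x₁·i (quaternion product). -/
/-! `N(x₂ + x₁ i) = N(x₁) + N(x₂) + 2·Im_i(x̄₁x₂)`, so the hypothesis gives
`N(x₂ + x₁ i) = N(x₁) + N(x₂) - 2t`; both claims follow from `N ≥ 0` and `N(q) = 0 ↔ q = 0`. -/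

noncomputable section

/-- The quaternion unit `i`. -/
def qi : Quaternion ℝ := ⟨0, 1, 0, 0⟩

open Quaternion

theorem qN_eq_normSq (x : ℍ[ℝ]) : qN x = normSq x := (normSq_def' x).symm

theorem normSq_add_mul_qi (x y : ℍ[ℝ]) :
    normSq (y + x * qi) = normSq x + normSq y + 2 * (star x * y).imI := by
  simp only [normSq_def', re_add, imI_add, imJ_add, imK_add, re_mul, imI_mul, imJ_mul,
    imK_mul, re_star, imI_star, imJ_star, imK_star]
  simp only [qi]
  ring

theorem stmt4_general (x₁ x₂ : Quaternion ℝ) (s t : ℝ)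
    (h : star x₁ * x₂ = (⟨s, -t, 0, 0⟩ : Quaternion ℝ)) :
    t ≤ (qN x₁ + qN x₂) / 2 ∧
      (t = (qN x₁ + qN x₂) / 2 → x₂ = -(x₁ * qi)) := by
  have hnorm : normSq (x₂ + x₁ * qi) = qN x₁ + qN x₂ - 2 * t := by
    rw [normSq_add_mul_qi, h, qN_eq_normSq, qN_eq_normSq]
    ring
  refine ⟨by linarith [(normSq_nonneg : 0 ≤ normSq (x₂ + x₁ * qi))], fun heq => ?_⟩
  have hzero : normSq (x₂ + x₁ * qi) = 0 := by linarith
  exact eq_neg_of_add_eq_zero_left (normSq_eq_zero.mp hzero)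

/-- if `x̄₁x₂ = s − t·i` with s, t real and t ≥ 0, then
`t ≤ (N(x₁)+N(x₂))/2`, with equality only when `x₂ = −x₁·i`. -/
theorem stmt4 (x₁ x₂ : Quaternion ℝ) (s t : ℝ) (ht : 0 ≤ t)
    (h : star x₁ * x₂ = (⟨s, -t, 0, 0⟩ : Quaternion ℝ)) :
    t ≤ (qN x₁ + qN x₂) / 2 ∧
      (t = (qN x₁ + qN x₂) / 2 → x₂ = -(x₁ * qi)) :=
  stmt4_general x₁ x₂ s t h
end
end

section
/- For all x, y ∈ ℚ_p the following three identities hold: (i) Σ_{a ∈ ℤ_p/pℤ_p} σ(x+p^{−1}a)·σ(y+p^{−1}a) = σ(px)·σ(py)·σ(x−y); (ii) Σ_{a ∈ ℤ_p/p²ℤ_p} σ(x+p^{−2}a)·σ(y+p^{−2}a) = σ(p²x)·σ(p²y)·σ(x−y); (iii) Σ_{a ∈ ℤ_p/p²ℤ_p} σ(p^{−1}(x+a))·σ(p^{−1}(y+p^{−1}a)) = σ(x)·σ(py)·σ(p^{−1}x − y). -/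
noncomputable section
open scoped Classical

/-- The characteristic function σ of ℤ_p inside ℚ_p: `σ(x) = 1` if `x ∈ ℤ_p`, else 0. -/
def pind {p : ℕ} [Fact p.Prime] (x : ℚ_[p]) : ℝ := if ‖x‖ ≤ 1 then 1 else 0

/-! For `w ∈ ℚ_p`, the point `w + p⁻ⁿa` lies in `ℤ_p` for exactly one residue `a` mod `pⁿ` when
`pⁿw ∈ ℤ_p` (namely `a ≡ -pⁿw`), and for none otherwise, so `Σ_a σ(w + p⁻ⁿa) = σ(pⁿw)`.
Since `σ(t + u) = σ(t)` for `u ∈ ℤ_p` (ultrametric inequality), in each of the three sums the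
first factor is constant on the support of the second, which reduces every identity to this
count. -/

open Finset IsUltrametricDist

lemma norm_mul_le_one_of_le_one {R : Type*} [SeminormedRing R] {c t : R} (hc : ‖c‖ ≤ 1)
    (ht : ‖t‖ ≤ 1) : ‖c * t‖ ≤ 1 :=
  (norm_mul_le c t).trans (mul_le_one₀ hc (norm_nonneg _) ht)

section

variable {p : ℕ} [Fact p.Prime]

lemma pind_add_of_norm_le_one (t : ℚ_[p]) {u : ℚ_[p]} (hu : ‖u‖ ≤ 1) :
    pind (t + u) = pind t := by
  have hiff : ‖t + u‖ ≤ 1 ↔ ‖t‖ ≤ 1 :=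
    ⟨fun h => by simpa using (norm_add_le_max (t + u) (-u)).trans (max_le h (by simpa)),
      fun h => (norm_add_le_max t u).trans (max_le h hu)⟩
  simp only [pind, hiff]

lemma pind_add_mul_mul_pind {c : ℚ_[p]} (hc : ‖c‖ ≤ 1) (t v : ℚ_[p]) :
    pind (t + c * v) * pind v = pind t * pind v := by
  by_cases hv : ‖v‖ ≤ 1
  · rw [pind_add_of_norm_le_one t (norm_mul_le_one_of_le_one hc hv)]
  · simp [pind, hv]

lemma pind_mul_self (x : ℚ_[p]) : pind x * pind x = pind x := by
  unfold pind
  split_ifs <;> norm_num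

lemma pind_mul_add_mul_pind_mul_pind {c : ℚ_[p]} (hc : ‖c‖ ≤ 1) (t v : ℚ_[p]) :
    pind (c * t + v) * pind v * pind t = pind v * pind t := by
  by_cases ht : ‖t‖ ≤ 1
  · rw [add_comm, pind_add_of_norm_le_one v (norm_mul_le_one_of_le_one hc ht), pind_mul_self]
  · simp [pind, ht]

lemma norm_p_pow_le_one (n : ℕ) : ‖(p : ℚ_[p]) ^ n‖ ≤ 1 := by
  rw [norm_pow]
  exact pow_le_one₀ (norm_nonneg _) Padic.norm_p_lt_one.le

lemma pind_inv_pow_mul (n : ℕ) (u : ℚ_[p]) :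
    pind (((p : ℚ_[p]) ^ n)⁻¹ * u) = if ‖u‖ ≤ (p : ℝ) ^ (-n : ℤ) then 1 else 0 := by
  have hpos : 0 < (p : ℝ) ^ (-n : ℤ) := zpow_pos (by exact_mod_cast (Fact.out : p.Prime).pos) _
  simp only [pind, norm_mul, norm_inv, Padic.norm_p_pow, inv_mul_le_iff₀ hpos, mul_one]

lemma sum_range_pind_inv_pow_mul_add_natCast (n : ℕ) (z : ℤ_[p]) :
    ∑ a ∈ range (p ^ n), pind (((p : ℚ_[p]) ^ n)⁻¹ * ((z : ℚ_[p]) + (a : ℚ_[p]))) = 1 := by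
  set r : ZMod (p ^ n) := -PadicInt.toZModPow n z
  have hterm : ∀ a ∈ range (p ^ n),
      pind (((p : ℚ_[p]) ^ n)⁻¹ * ((z : ℚ_[p]) + (a : ℚ_[p]))) = if a = r.val then 1 else 0 := by
    intro a ha
    have hcast : (z : ℚ_[p]) + (a : ℚ_[p]) = ((z + a : ℤ_[p]) : ℚ_[p]) := by push_cast; rfl
    have hval : (a : ZMod (p ^ n)) = r ↔ a = r.val := by
      rw [← (ZMod.val_injective _).eq_iff, ZMod.val_natCast, Nat.mod_eq_of_lt (mem_range.1 ha)]
    have hmem : ‖z + (a : ℤ_[p])‖ ≤ (p : ℝ) ^ (-n : ℤ) ↔ a = r.val := by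
      rw [PadicInt.norm_le_pow_iff_mem_span_pow, ← PadicInt.ker_toZModPow, RingHom.mem_ker,
        map_add, map_natCast, ← hval, eq_neg_iff_add_eq_zero, add_comm]
    rw [pind_inv_pow_mul, hcast, ← PadicInt.norm_def]
    simp only [hmem]
  rw [sum_congr rfl hterm, sum_ite_eq', if_pos (mem_range.2 (ZMod.val_lt r))]

lemma sum_range_pind_add_inv_pow_mul (n : ℕ) (w : ℚ_[p]) :
    ∑ a ∈ range (p ^ n), pind (w + ((p : ℚ_[p]) ^ n)⁻¹ * (a : ℚ_[p]))
      = pind ((p : ℚ_[p]) ^ n * w) := by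
  have hq : (p : ℚ_[p]) ^ n ≠ 0 := pow_ne_zero _ (Nat.cast_ne_zero.2 (Fact.out : p.Prime).ne_zero)
  have hshift : ∀ a : ℕ, w + ((p : ℚ_[p]) ^ n)⁻¹ * (a : ℚ_[p])
      = ((p : ℚ_[p]) ^ n)⁻¹ * ((p : ℚ_[p]) ^ n * w + (a : ℚ_[p])) := fun a => by
    field_simp
  by_cases hw : ‖(p : ℚ_[p]) ^ n * w‖ ≤ 1
  · simp only [hshift]
    rw [sum_range_pind_inv_pow_mul_add_natCast n ⟨_, hw⟩, pind, if_pos hw]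
  · refine (sum_eq_zero fun a _ => if_neg fun h => hw ?_).trans (if_neg hw).symm
    have hqw : (p : ℚ_[p]) ^ n * w
        = (p : ℚ_[p]) ^ n * (w + ((p : ℚ_[p]) ^ n)⁻¹ * (a : ℚ_[p])) + -(a : ℚ_[p]) := by
      field_simp
      ring
    rw [hqw]
    refine (norm_add_le_max _ _).trans (max_le ?_ ?_)
    · exact norm_mul_le_one_of_le_one (norm_p_pow_le_one n) h
    · simpa using norm_natCast_le_one ℚ_[p] a

lemma sum_range_pind_add_inv_pow_mul_mul_pind_add_inv_pow_mul (n : ℕ) (x y : ℚ_[p]) :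
    ∑ a ∈ range (p ^ n),
        pind (x + ((p : ℚ_[p]) ^ n)⁻¹ * (a : ℚ_[p])) * pind (y + ((p : ℚ_[p]) ^ n)⁻¹ * (a : ℚ_[p]))
      = pind ((p : ℚ_[p]) ^ n * x) * pind ((p : ℚ_[p]) ^ n * y) * pind (x - y) := by
  have hterm : ∀ a : ℕ,
      pind (x + ((p : ℚ_[p]) ^ n)⁻¹ * (a : ℚ_[p])) * pind (y + ((p : ℚ_[p]) ^ n)⁻¹ * (a : ℚ_[p]))
        = pind (x - y) * pind (y + ((p : ℚ_[p]) ^ n)⁻¹ * (a : ℚ_[p])) := fun a => by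
    rw [show x + ((p : ℚ_[p]) ^ n)⁻¹ * (a : ℚ_[p])
        = x - y + 1 * (y + ((p : ℚ_[p]) ^ n)⁻¹ * (a : ℚ_[p])) by ring,
      pind_add_mul_mul_pind norm_one.le]
  rw [sum_congr rfl fun a _ => hterm a, ← mul_sum, sum_range_pind_add_inv_pow_mul,
    show (p : ℚ_[p]) ^ n * x = (p : ℚ_[p]) ^ n * (x - y) + (p : ℚ_[p]) ^ n * y by ring,
    pind_mul_add_mul_pind_mul_pind (norm_p_pow_le_one n), mul_comm]

lemma sum_range_sq_pind_inv_mul_add_mul_pind_inv_mul_add_inv_mul (x y : ℚ_[p]) :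
    ∑ a ∈ range (p ^ 2),
        pind ((p : ℚ_[p])⁻¹ * (x + (a : ℚ_[p])))
          * pind ((p : ℚ_[p])⁻¹ * (y + (p : ℚ_[p])⁻¹ * (a : ℚ_[p])))
      = pind x * pind ((p : ℚ_[p]) * y) * pind ((p : ℚ_[p])⁻¹ * x - y) := by
  have hp : (p : ℚ_[p]) ≠ 0 := Nat.cast_ne_zero.2 (Fact.out : p.Prime).ne_zero
  have hterm : ∀ a : ℕ,
      pind ((p : ℚ_[p])⁻¹ * (x + (a : ℚ_[p])))
          * pind ((p : ℚ_[p])⁻¹ * (y + (p : ℚ_[p])⁻¹ * (a : ℚ_[p])))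
        = pind ((p : ℚ_[p])⁻¹ * x - y)
          * pind ((p : ℚ_[p])⁻¹ * y + ((p : ℚ_[p]) ^ 2)⁻¹ * (a : ℚ_[p])) := fun a => by
    rw [show (p : ℚ_[p])⁻¹ * (x + (a : ℚ_[p]))
        = (p : ℚ_[p])⁻¹ * x - y + p * ((p : ℚ_[p])⁻¹ * (y + (p : ℚ_[p])⁻¹ * (a : ℚ_[p]))) by
          field_simp; ring,
      pind_add_mul_mul_pind Padic.norm_p_lt_one.le]
    congr 2
    field_simp
  have hrhs :=
    pind_mul_add_mul_pind_mul_pind Padic.norm_p_lt_one.le ((p : ℚ_[p])⁻¹ * x - y) (p * y)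
  rw [show (p : ℚ_[p]) * ((p : ℚ_[p])⁻¹ * x - y) + p * y = x by field_simp; ring] at hrhs
  rw [sum_congr rfl fun a _ => hterm a, ← mul_sum, sum_range_pind_add_inv_pow_mul,
    show (p : ℚ_[p]) ^ 2 * ((p : ℚ_[p])⁻¹ * y) = p * y by field_simp, hrhs, mul_comm]

end

/-- for all x, y ∈ ℚ_p,
(i) `Σ_{a ∈ ℤ_p/pℤ_p} σ(x+p⁻¹a)·σ(y+p⁻¹a) = σ(px)·σ(py)·σ(x−y)`;
(ii) `Σ_{a ∈ ℤ_p/p²ℤ_p} σ(x+p⁻²a)·σ(y+p⁻²a) = σ(p²x)·σ(p²y)·σ(x−y)`;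
(iii) `Σ_{a ∈ ℤ_p/p²ℤ_p} σ(p⁻¹(x+a))·σ(p⁻¹(y+p⁻¹a)) = σ(x)·σ(py)·σ(p⁻¹x − y)`. -/
theorem stmt9 (p : ℕ) [Fact p.Prime] (x y : ℚ_[p]) :
    (∑ a ∈ Finset.range p,
        pind (x + (p : ℚ_[p])⁻¹ * (a : ℚ_[p])) * pind (y + (p : ℚ_[p])⁻¹ * (a : ℚ_[p])))
        = pind ((p : ℚ_[p]) * x) * pind ((p : ℚ_[p]) * y) * pind (x - y) ∧
    (∑ a ∈ Finset.range (p ^ 2),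
        pind (x + ((p : ℚ_[p]) ^ 2)⁻¹ * (a : ℚ_[p]))
          * pind (y + ((p : ℚ_[p]) ^ 2)⁻¹ * (a : ℚ_[p])))
        = pind ((p : ℚ_[p]) ^ 2 * x) * pind ((p : ℚ_[p]) ^ 2 * y) * pind (x - y) ∧
    (∑ a ∈ Finset.range (p ^ 2),
        pind ((p : ℚ_[p])⁻¹ * (x + (a : ℚ_[p])))
          * pind ((p : ℚ_[p])⁻¹ * (y + (p : ℚ_[p])⁻¹ * (a : ℚ_[p]))))
        = pind x * pind ((p : ℚ_[p]) * y) * pind ((p : ℚ_[p])⁻¹ * x - y) := by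
  exact ⟨by simpa using sum_range_pind_add_inv_pow_mul_mul_pind_add_inv_pow_mul 1 x y,
    sum_range_pind_add_inv_pow_mul_mul_pind_add_inv_pow_mul 2 x y,
    sum_range_sq_pind_inv_mul_add_mul_pind_inv_mul_add_inv_mul x y⟩
end
end

section
/- For all x, y ∈ ℚ_p one has σ(y)·Σ_{a ∈ ℤ_p/pℤ_p} σ(p^{−1}(x+ay)) = p·σ(p^{−1}x)·σ(p^{−1}y) + σ(x)·σ(y) − σ(x)·σ(p^{−1}y). -/
/-!
If `y ∉ ℤ_p` both sides vanish, and if `y ∈ ℤ_p` but `x ∉ ℤ_p` then `x + a y ∉ ℤ_p` for all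
`a ∈ ℤ_p`, so again both sides vanish. When `x, y ∈ ℤ_p`, the condition `p⁻¹ (x + a y) ∈ ℤ_p`
reads `x̄ + a ȳ = 0` in `ℤ/p` after reduction. If `ȳ = 0` this holds for all `p` residues or none,
according as `x̄ = 0`; if `ȳ ≠ 0` it holds for exactly one residue `a = -x̄/ȳ`.
-/

noncomputable section
open scoped Classical

open Finset

theorem ZMod.sum_range_ite_natCast_eq {n : ℕ} [NeZero n] {M : Type*} [AddCommMonoidWithOne M]
    (c : ZMod n) : ∑ a ∈ range n, (if (a : ZMod n) = c then (1 : M) else 0) = 1 := by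
  have hiff : ∀ a ∈ range n, (a : ZMod n) = c ↔ a = c.val := fun a ha => by
    rw [← (ZMod.val_injective n).eq_iff, ZMod.val_natCast_of_lt (mem_range.mp ha)]
  rw [sum_congr rfl fun a ha => if_congr (hiff a ha) rfl rfl, sum_ite_eq',
    if_pos (mem_range.mpr c.val_lt)]

section

variable {p : ℕ} [Fact p.Prime]

theorem ZMod.sum_range_ite_add_mul_eq_zero {M : Type*} [AddCommMonoidWithOne M]
    (u : ZMod p) {v : ZMod p} (hv : v ≠ 0) :
    ∑ a ∈ range p, (if u + a * v = 0 then (1 : M) else 0) = 1 := by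
  have hiff : ∀ a : ℕ, u + a * v = 0 ↔ (a : ZMod p) = -u / v := fun a => by
    rw [eq_div_iff hv, eq_neg_iff_add_eq_zero, add_comm]
  simp only [hiff, ZMod.sum_range_ite_natCast_eq]

theorem PadicInt.norm_lt_one_iff_toZMod_eq_zero (x : ℤ_[p]) :
    ‖x‖ < 1 ↔ PadicInt.toZMod x = 0 := by
  rw [← RingHom.mem_ker, PadicInt.ker_toZMod, IsLocalRing.mem_maximalIdeal,
    PadicInt.mem_nonunits]

theorem Padic.norm_inv_p_mul_le_one_iff (w : ℚ_[p]) :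
    ‖(p : ℚ_[p])⁻¹ * w‖ ≤ 1 ↔ ‖w‖ < 1 := by
  have hp : (0 : ℝ) < p := Nat.cast_pos.mpr (Fact.out : p.Prime).pos
  rw [norm_mul, norm_inv, Padic.norm_p, inv_inv, ← le_div_iff₀' hp, one_div,
    ← zpow_neg_one, Padic.norm_le_pow_iff_norm_lt_pow_add_one]
  norm_num

theorem pind_inv_p_mul (w : ℚ_[p]) :
    pind ((p : ℚ_[p])⁻¹ * w) = if ‖w‖ < 1 then 1 else 0 :=
  if_congr (Padic.norm_inv_p_mul_le_one_iff w) rfl rfl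

theorem pind_inv_p_mul_coe (x : ℤ_[p]) :
    pind ((p : ℚ_[p])⁻¹ * (x : ℚ_[p])) = if PadicInt.toZMod x = 0 then 1 else 0 := by
  rw [pind_inv_p_mul]
  exact if_congr (PadicInt.norm_lt_one_iff_toZMod_eq_zero x) rfl rfl

theorem pind_coe (x : ℤ_[p]) : pind (x : ℚ_[p]) = 1 :=
  if_pos (PadicInt.norm_le_one x)

theorem pind_inv_p_mul_add_natCast_mul_coe (x y : ℤ_[p]) (a : ℕ) :
    pind ((p : ℚ_[p])⁻¹ * ((x : ℚ_[p]) + (a : ℚ_[p]) * (y : ℚ_[p]))) =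
      if PadicInt.toZMod x + a * PadicInt.toZMod y = 0 then 1 else 0 := by
  rw [← PadicInt.coe_natCast a, ← PadicInt.coe_mul, ← PadicInt.coe_add, pind_inv_p_mul_coe,
    map_add, map_mul, map_natCast]

theorem pind_inv_p_mul_add_natCast_mul_of_one_lt_norm {x y : ℚ_[p]} (hx : 1 < ‖x‖)
    (hy : ‖y‖ ≤ 1) (a : ℕ) : pind ((p : ℚ_[p])⁻¹ * (x + (a : ℚ_[p]) * y)) = 0 := by
  have hay : ‖(a : ℚ_[p]) * y‖ < ‖x‖ := by
    calc ‖(a : ℚ_[p]) * y‖ = ‖((a : ℤ) : ℚ_[p])‖ * ‖y‖ := by rw [norm_mul, Int.cast_natCast]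
      _ ≤ 1 := mul_le_one₀ (Padic.norm_int_le_one a) (norm_nonneg y) hy
      _ < ‖x‖ := hx
  rw [pind_inv_p_mul, IsUltrametricDist.norm_add_eq_max_of_norm_ne_norm hay.ne',
    max_eq_left hay.le, if_neg hx.not_gt]

end

/-- for all x, y ∈ ℚ_p,
`σ(y)·Σ_{a ∈ ℤ_p/pℤ_p} σ(p⁻¹(x+ay)) = p·σ(p⁻¹x)·σ(p⁻¹y) + σ(x)·σ(y) − σ(x)·σ(p⁻¹y)`. -/
theorem stmt10 (p : ℕ) [Fact p.Prime] (x y : ℚ_[p]) :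
    pind y * (∑ a ∈ Finset.range p, pind ((p : ℚ_[p])⁻¹ * (x + (a : ℚ_[p]) * y)))
      = (p : ℝ) * pind ((p : ℚ_[p])⁻¹ * x) * pind ((p : ℚ_[p])⁻¹ * y)
          + pind x * pind y - pind x * pind ((p : ℚ_[p])⁻¹ * y) := by
  rcases le_or_gt ‖y‖ 1 with hy | hy
  swap
  · rw [show pind y = 0 from if_neg hy.not_ge, pind_inv_p_mul y, if_neg hy.not_gt]
    ring
  rcases le_or_gt ‖x‖ 1 with hx | hx
  swap
  · rw [sum_congr rfl fun a _ => pind_inv_p_mul_add_natCast_mul_of_one_lt_norm hx hy a,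
      show pind x = 0 from if_neg hx.not_ge, pind_inv_p_mul x, if_neg hx.not_gt]
    simp
  obtain ⟨x, rfl⟩ : ∃ x' : ℤ_[p], (x' : ℚ_[p]) = x := ⟨⟨x, hx⟩, rfl⟩
  obtain ⟨y, rfl⟩ : ∃ y' : ℤ_[p], (y' : ℚ_[p]) = y := ⟨⟨y, hy⟩, rfl⟩
  simp only [pind_coe, pind_inv_p_mul_coe, pind_inv_p_mul_add_natCast_mul_coe]
  by_cases hy0 : PadicInt.toZMod y = 0
  · simp [hy0]
  · rw [ZMod.sum_range_ite_add_mul_eq_zero _ hy0, if_neg hy0]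
    ring
end
end

section
/- For all x, y ∈ ℚ_p the following two identities hold: (i) σ(x)·σ(y)·σ(p^{−1}xy) = σ(x)·σ(p^{−1}y) + σ(p^{−1}x)·σ(y) − σ(p^{−1}x)·σ(p^{−1}y); (ii) σ(px)·σ(py)·σ(pxy) = σ(px)·σ(y) + σ(x)·σ(py) − σ(x)·σ(y). -/
noncomputable section
open scoped Classical

/-- for all x, y ∈ ℚ_p,
(i) `σ(x)·σ(y)·σ(p⁻¹xy) = σ(x)·σ(p⁻¹y) + σ(p⁻¹x)·σ(y) − σ(p⁻¹x)·σ(p⁻¹y)`;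
(ii) `σ(px)·σ(py)·σ(pxy) = σ(px)·σ(y) + σ(x)·σ(py) − σ(x)·σ(y)`. -/
theorem stmt11 (p : ℕ) [Fact p.Prime] (x y : ℚ_[p]) :
    (pind x * pind y * pind ((p : ℚ_[p])⁻¹ * (x * y))
        = pind x * pind ((p : ℚ_[p])⁻¹ * y) + pind ((p : ℚ_[p])⁻¹ * x) * pind y
            - pind ((p : ℚ_[p])⁻¹ * x) * pind ((p : ℚ_[p])⁻¹ * y)) ∧
    (pind ((p : ℚ_[p]) * x) * pind ((p : ℚ_[p]) * y) * pind ((p : ℚ_[p]) * (x * y))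
        = pind ((p : ℚ_[p]) * x) * pind y + pind x * pind ((p : ℚ_[p]) * y)
            - pind x * pind y) := by
  have hp1 : (1 : ℝ) < p := by exact_mod_cast (Fact.out : p.Prime).one_lt
  have hp0 : (0 : ℝ) < p := lt_trans one_pos hp1
  have hpinv : ‖((p : ℚ_[p]))⁻¹‖ = (p : ℝ) := by
    rw [norm_inv, Padic.norm_p, inv_inv]
  -- ‖p⁻¹ * z‖ ≤ 1 ↔ ‖z‖ < 1
  have key1 : ∀ z : ℚ_[p], (‖(p : ℚ_[p])⁻¹ * z‖ ≤ 1 ↔ ‖z‖ < 1) := by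
    intro z
    rw [norm_mul, hpinv]
    have h := Padic.norm_le_pow_iff_norm_lt_pow_add_one z (-1)
    rw [show (-1 : ℤ) + 1 = 0 by ring, zpow_zero, zpow_neg_one] at h
    rw [← h]
    rw [← le_div_iff₀' hp0, one_div]
  -- ‖p * z‖ ≤ 1 ↔ ‖z‖ ≤ p
  have key2 : ∀ z : ℚ_[p], (‖(p : ℚ_[p]) * z‖ ≤ 1 ↔ ‖z‖ ≤ p) := by
    intro z
    rw [norm_mul, Padic.norm_p]
    rw [← div_eq_inv_mul, div_le_one hp0]
  -- discreteness: ¬ ‖z‖ ≤ 1 → p ≤ ‖z‖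
  have disc : ∀ z : ℚ_[p], ¬ (‖z‖ ≤ 1) → (p : ℝ) ≤ ‖z‖ := by
    intro z hz
    by_contra h
    push_neg at h
    have h2 := (Padic.norm_le_pow_iff_norm_lt_pow_add_one z 0).mpr (by
      rw [show (0 : ℤ) + 1 = 1 by ring, zpow_one]; exact h)
    rw [zpow_zero] at h2
    exact hz h2
  constructor
  · -- part (i)
    simp only [pind, key1]
    simp only [norm_mul]
    by_cases hx1 : ‖x‖ < 1
    · have hx1' : ‖x‖ ≤ 1 := le_of_lt hx1
      by_cases hy1 : ‖y‖ ≤ 1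
      · have hprod : ‖x‖ * ‖y‖ < 1 :=
          lt_of_le_of_lt (mul_le_of_le_one_right (norm_nonneg x) hy1) hx1
        simp only [if_pos hx1, if_pos hx1', if_pos hy1, if_pos hprod]
        split_ifs <;> ring
      · have hy1' : ¬ ‖y‖ < 1 := fun h => hy1 (le_of_lt h)
        simp [if_pos hx1, if_pos hx1', if_neg hy1, if_neg hy1']
    · by_cases hx0 : ‖x‖ ≤ 1
      · have hxe : ‖x‖ = 1 := le_antisymm hx0 (not_lt.mp hx1)
        by_cases hy1 : ‖y‖ < 1
        · have hy1' : ‖y‖ ≤ 1 := le_of_lt hy1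
          have hprod : ‖x‖ * ‖y‖ < 1 := by rw [hxe, one_mul]; exact hy1
          simp [if_pos hx0, if_neg hx1, if_pos hy1, if_pos hy1', if_pos hprod]
        · by_cases hy0 : ‖y‖ ≤ 1
          · have hye : ‖y‖ = 1 := le_antisymm hy0 (not_lt.mp hy1)
            have hprod : ¬ ‖x‖ * ‖y‖ < 1 := by rw [hxe, hye, one_mul]; exact lt_irrefl 1
            simp [if_pos hx0, if_neg hx1, if_neg hy1, if_pos hy0, if_neg hprod]
          · simp [if_pos hx0, if_neg hx1, if_neg hy1, if_neg hy0]
      · have hx1'' : ¬ ‖x‖ < 1 := hx1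
        simp [if_neg hx0, if_neg hx1'']
  · -- part (ii)
    simp only [pind, key2]
    simp only [norm_mul]
    by_cases hxA : ‖x‖ ≤ 1
    · have hxC : ‖x‖ ≤ (p : ℝ) := le_trans hxA (le_of_lt hp1)
      by_cases hyB : ‖y‖ ≤ 1
      · have hyC : ‖y‖ ≤ (p : ℝ) := le_trans hyB (le_of_lt hp1)
        have hprod : ‖x‖ * ‖y‖ ≤ (p : ℝ) :=
          le_trans (mul_le_one₀ hxA (norm_nonneg y) hyB) (le_of_lt hp1)
        simp [if_pos hxA, if_pos hxC, if_pos hyB, if_pos hyC, if_pos hprod]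
      · by_cases hyC : ‖y‖ ≤ (p : ℝ)
        · have hprod : ‖x‖ * ‖y‖ ≤ (p : ℝ) := by
            calc ‖x‖ * ‖y‖ ≤ 1 * (p : ℝ) :=
              mul_le_mul hxA hyC (norm_nonneg y) zero_le_one
            _ = (p : ℝ) := one_mul _
          simp [if_pos hxA, if_pos hxC, if_neg hyB, if_pos hyC, if_pos hprod]
        · simp [if_pos hxA, if_pos hxC, if_neg hyB, if_neg hyC]
    · by_cases hxC : ‖x‖ ≤ (p : ℝ)
      · by_cases hyB : ‖y‖ ≤ 1
        · have hyC : ‖y‖ ≤ (p : ℝ) := le_trans hyB (le_of_lt hp1)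
          have hprod : ‖x‖ * ‖y‖ ≤ (p : ℝ) := by
            calc ‖x‖ * ‖y‖ ≤ (p : ℝ) * 1 :=
              mul_le_mul hxC hyB (norm_nonneg y) (le_of_lt hp0)
            _ = (p : ℝ) := mul_one _
          simp [if_neg hxA, if_pos hxC, if_pos hyB, if_pos hyC, if_pos hprod]
        · by_cases hyC : ‖y‖ ≤ (p : ℝ)
          · have hxp : (p : ℝ) ≤ ‖x‖ := disc x hxA
            have hyp : (p : ℝ) ≤ ‖y‖ := disc y hyB
            have hprod : ¬ ‖x‖ * ‖y‖ ≤ (p : ℝ) := by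
              push_neg
              calc (p : ℝ) < (p : ℝ) * (p : ℝ) := by nlinarith
              _ ≤ ‖x‖ * ‖y‖ := mul_le_mul hxp hyp (le_of_lt hp0) (norm_nonneg x)
            simp [if_neg hxA, if_pos hxC, if_neg hyB, if_pos hyC, if_neg hprod]
          · simp [if_neg hxA, if_pos hxC, if_neg hyB, if_neg hyC]
      · simp [if_neg hxA, if_neg hxC]
end
end

section
/- For every y = (y₁,y₂;y₃,y₄) ∈ ℚ_p^{2×2} the following two identities hold: (i) σ(y₂)·σ(y₄)·Σ_{a ∈ ℤ_p/pℤ_p} σ(p^{−1}(y₁+a·y₂))·σ(p^{−1}(y₃+a·y₄)) = [0,0,0,0](y)·σ(p^{−1}·det y) + p·[1,1,1,1](y) − [0,1,0,1](y); (ii) σ(p·y₂)·σ(p·y₄)·Σ_{a ∈ ℤ_p/pℤ_p} σ(y₁+a·y₂)·σ(y₃+a·y₄) = [−1,−1,−1,−1](y)·σ(p·det y) + p·[0,0,0,0](y) − [−1,0,−1,0](y). -/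
noncomputable section
open scoped Classical

/-- `[i₁,i₂,i₃,i₄](y) = σ(p^{−i₁}y₁)·σ(p^{−i₂}y₂)·σ(p^{−i₃}y₃)·σ(p^{−i₄}y₄)`. -/
def brk {p : ℕ} [Fact p.Prime] (i₁ i₂ i₃ i₄ : ℤ) (y₁ y₂ y₃ y₄ : ℚ_[p]) : ℝ :=
  pind ((p : ℚ_[p]) ^ (-i₁) * y₁) * pind ((p : ℚ_[p]) ^ (-i₂) * y₂)
    * pind ((p : ℚ_[p]) ^ (-i₃) * y₃) * pind ((p : ℚ_[p]) ^ (-i₄) * y₄)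

/-! Part (i) is part (ii) applied to `p⁻¹ y`. For (ii): if `y₂, y₄ ∈ ℤ_p` every summand equals
`σ(y₁)σ(y₃)`, and `p det y = (p y₁) y₄ - y₂ (p y₃)` is integral as soon as `p y₁, p y₃` are.
Otherwise, after possibly swapping the two rows, `p y₄` is a unit, so `y₃ + a y₄ ∈ ℤ_p` holds for
exactly one residue `a₀` (and for none unless `p y₃ ∈ ℤ_p`); the identity
`p det y = (p y₄)(y₁ + a₀ y₂) - (p y₂)(y₃ + a₀ y₄)` then shows that the surviving summand
`σ(y₁ + a₀ y₂)` equals `σ(p y₁) σ(p det y)`. -/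

section

variable {p : ℕ} [Fact p.Prime]

lemma pind_eq_one {x : ℚ_[p]} (h : ‖x‖ ≤ 1) : pind x = 1 := if_pos h

lemma pind_eq_zero {x : ℚ_[p]} (h : ¬‖x‖ ≤ 1) : pind x = 0 := if_neg h

lemma pind_neg (x : ℚ_[p]) : pind (-x) = pind x := by
  simp only [pind, norm_neg]

lemma pind_mul_of_norm_eq_one {u : ℚ_[p]} (hu : ‖u‖ = 1) (x : ℚ_[p]) : pind (u * x) = pind x := by
  simp only [pind, norm_mul, hu, one_mul]

lemma pind_add_of_norm_le_one_s12 (x : ℚ_[p]) {z : ℚ_[p]} (hz : ‖z‖ ≤ 1) :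
    pind (x + z) = pind x := by
  have h : ‖x + z‖ ≤ 1 ↔ ‖x‖ ≤ 1 :=
    ⟨fun h ↦ by simpa using (PadicInt.subring p).sub_mem h hz,
      fun h ↦ (PadicInt.subring p).add_mem h hz⟩
  simp only [pind, h]

lemma pind_sub_of_norm_le_one (x : ℚ_[p]) {z : ℚ_[p]} (hz : ‖z‖ ≤ 1) :
    pind (x - z) = pind x := by
  rw [sub_eq_add_neg, pind_add_of_norm_le_one_s12 x (by rwa [norm_neg])]

lemma norm_natCast_mul_le_one (a : ℕ) {x : ℚ_[p]} (hx : ‖x‖ ≤ 1) : ‖(a : ℚ_[p]) * x‖ ≤ 1 :=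
  (PadicInt.subring p).mul_mem (IsUltrametricDist.norm_natCast_le_one ℚ_[p] a) hx

lemma norm_le_one_iff_norm_p_mul_lt_one (x : ℚ_[p]) : ‖x‖ ≤ 1 ↔ ‖(p : ℚ_[p]) * x‖ < 1 := by
  have hp : (0 : ℝ) < p := Nat.cast_pos.2 (Fact.out : p.Prime).pos
  rw [norm_mul, Padic.norm_p, inv_mul_lt_iff₀ hp, mul_one]
  simpa using Padic.norm_le_pow_iff_norm_lt_pow_add_one x 0

lemma norm_p_mul_le_one {x : ℚ_[p]} (h : ‖x‖ ≤ 1) : ‖(p : ℚ_[p]) * x‖ ≤ 1 :=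
  ((norm_le_one_iff_norm_p_mul_lt_one x).1 h).le

lemma norm_p_mul_eq_one {x : ℚ_[p]} (h : ‖(p : ℚ_[p]) * x‖ ≤ 1) (hx : ¬‖x‖ ≤ 1) :
    ‖(p : ℚ_[p]) * x‖ = 1 :=
  le_antisymm h (not_lt.1 (mt (norm_le_one_iff_norm_p_mul_lt_one x).2 hx))

lemma pind_p_mul_mul_self (x : ℚ_[p]) : pind ((p : ℚ_[p]) * x) * pind x = pind x := by
  by_cases h : ‖x‖ ≤ 1
  · rw [pind_eq_one (norm_p_mul_le_one h), one_mul]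
  · rw [pind_eq_zero h, mul_zero]

lemma existsUnique_nat_lt_norm_add_lt_one {t : ℚ_[p]} (ht : ‖t‖ ≤ 1) :
    ∃! a : ℕ, a < p ∧ ‖t + a‖ < 1 := by
  set T : ℤ_[p] := ⟨t, ht⟩
  have key (a : ℕ) : ‖t + a‖ < 1 ↔ (a : ZMod p) = -PadicInt.toZMod T := by
    rw [eq_neg_iff_add_eq_zero, add_comm, ← map_natCast PadicInt.toZMod a, ← map_add,
      ← RingHom.mem_ker, PadicInt.ker_toZMod, IsLocalRing.mem_maximalIdeal,
      PadicInt.mem_nonunits]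
    rfl
  refine ⟨(-PadicInt.toZMod T).val, ⟨ZMod.val_lt _, (key _).2 (ZMod.natCast_zmod_val _)⟩, ?_⟩
  rintro a ⟨ha, h⟩
  rw [← (key a).1 h, ZMod.val_natCast_of_lt ha]

lemma existsUnique_nat_lt_norm_add_nat_mul_lt_one {s u : ℚ_[p]} (hs : ‖s‖ ≤ 1) (hu : ‖u‖ = 1) :
    ∃! a : ℕ, a < p ∧ ‖s + a * u‖ < 1 := by
  have hu0 : u ≠ 0 := norm_ne_zero_iff.1 (by rw [hu]; exact one_ne_zero)
  have e (a : ℕ) : ‖s + a * u‖ = ‖s / u + a‖ := by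
    rw [← mul_one ‖s / u + a‖, ← hu, ← norm_mul, add_mul, div_mul_cancel₀ _ hu0]
  simpa only [e] using existsUnique_nat_lt_norm_add_lt_one (t := s / u)
    (by rwa [norm_div, hu, div_one])

lemma sum_pind_mul_pind_of_norm_le_one (y₁ y₃ : ℚ_[p]) {y₂ y₄ : ℚ_[p]} (h₂ : ‖y₂‖ ≤ 1)
    (h₄ : ‖y₄‖ ≤ 1) :
    ∑ a ∈ Finset.range p, pind (y₁ + (a : ℚ_[p]) * y₂) * pind (y₃ + (a : ℚ_[p]) * y₄)
      = p * (pind y₁ * pind y₃) := by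
  rw [Finset.sum_congr rfl fun a _ ↦ by
      rw [pind_add_of_norm_le_one_s12 y₁ (norm_natCast_mul_le_one a h₂),
        pind_add_of_norm_le_one_s12 y₃ (norm_natCast_mul_le_one a h₄)],
    Finset.sum_const, Finset.card_range, nsmul_eq_mul]

lemma pind_p_mul_det_of_norm_le_one (y₁ y₃ : ℚ_[p]) {y₂ y₄ : ℚ_[p]} (h₂ : ‖y₂‖ ≤ 1)
    (h₄ : ‖y₄‖ ≤ 1) :
    pind ((p : ℚ_[p]) * y₁) * pind ((p : ℚ_[p]) * y₃)
        * pind ((p : ℚ_[p]) * (y₁ * y₄ - y₂ * y₃))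
      = pind ((p : ℚ_[p]) * y₁) * pind ((p : ℚ_[p]) * y₃) := by
  by_cases h : ‖(p : ℚ_[p]) * y₁‖ ≤ 1 ∧ ‖(p : ℚ_[p]) * y₃‖ ≤ 1
  · have hdet : ‖(p : ℚ_[p]) * (y₁ * y₄ - y₂ * y₃)‖ ≤ 1 := by
      rw [show (p : ℚ_[p]) * (y₁ * y₄ - y₂ * y₃) = (p * y₁) * y₄ - y₂ * (p * y₃) by ring]
      exact (PadicInt.subring p).sub_mem ((PadicInt.subring p).mul_mem h.1 h₄)
        ((PadicInt.subring p).mul_mem h₂ h.2)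
    rw [pind_eq_one hdet, mul_one]
  · rcases not_and_or.1 h with h | h <;> simp only [pind_eq_zero h, zero_mul, mul_zero]

lemma sum_pind_mul_pind_of_norm_p_mul_eq_one (y₁ y₃ : ℚ_[p]) {y₂ y₄ : ℚ_[p]}
    (h₂ : ‖(p : ℚ_[p]) * y₂‖ ≤ 1) (h₄ : ‖(p : ℚ_[p]) * y₄‖ = 1) :
    ∑ a ∈ Finset.range p, pind (y₁ + (a : ℚ_[p]) * y₂) * pind (y₃ + (a : ℚ_[p]) * y₄)
      = pind ((p : ℚ_[p]) * y₁) * pind ((p : ℚ_[p]) * y₃)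
          * pind ((p : ℚ_[p]) * (y₁ * y₄ - y₂ * y₃)) := by
  have hp_mul (a : ℕ) (x y : ℚ_[p]) : (p : ℚ_[p]) * (x + a * y) = p * x + a * (p * y) := by ring
  by_cases h₃ : ‖(p : ℚ_[p]) * y₃‖ ≤ 1
  · obtain ⟨a₀, ⟨ha₀, hw⟩, huniq⟩ := existsUnique_nat_lt_norm_add_nat_mul_lt_one h₃ h₄
    rw [← hp_mul, ← norm_le_one_iff_norm_p_mul_lt_one] at hw
    rw [Finset.sum_eq_single_of_mem a₀ (Finset.mem_range.2 ha₀), pind_eq_one hw, pind_eq_one h₃,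
      mul_one, mul_one]
    · rw [show (p : ℚ_[p]) * (y₁ * y₄ - y₂ * y₃)
          = (p * y₄) * (y₁ + a₀ * y₂) - (p * y₂) * (y₃ + a₀ * y₄) by ring,
        pind_sub_of_norm_le_one _ ((PadicInt.subring p).mul_mem h₂ hw),
        pind_mul_of_norm_eq_one h₄,
        show (p : ℚ_[p]) * y₁ = p * (y₁ + a₀ * y₂) - a₀ * (p * y₂) by ring,
        pind_sub_of_norm_le_one _ (norm_natCast_mul_le_one a₀ h₂), pind_p_mul_mul_self]
    · intro a ha hne
      rw [pind_eq_zero (x := y₃ + (a : ℚ_[p]) * y₄), mul_zero]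
      intro h
      rw [norm_le_one_iff_norm_p_mul_lt_one, hp_mul] at h
      exact hne (huniq a ⟨Finset.mem_range.1 ha, h⟩)
  · rw [pind_eq_zero h₃, mul_zero, zero_mul]
    refine Finset.sum_eq_zero fun a _ ↦ ?_
    rw [← pind_p_mul_mul_self (y₃ + (a : ℚ_[p]) * y₄), hp_mul,
      pind_add_of_norm_le_one_s12 _ (norm_natCast_mul_le_one a h₄.le), pind_eq_zero h₃, zero_mul,
      mul_zero]

lemma pind_p_mul_mul_sum_pind_mul_pind (y₁ y₂ y₃ y₄ : ℚ_[p]) :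
    pind ((p : ℚ_[p]) * y₂) * pind ((p : ℚ_[p]) * y₄) *
        ∑ a ∈ Finset.range p, pind (y₁ + (a : ℚ_[p]) * y₂) * pind (y₃ + (a : ℚ_[p]) * y₄)
      = pind ((p : ℚ_[p]) * y₁) * pind ((p : ℚ_[p]) * y₂) * pind ((p : ℚ_[p]) * y₃)
            * pind ((p : ℚ_[p]) * y₄) * pind ((p : ℚ_[p]) * (y₁ * y₄ - y₂ * y₃))
        + p * (pind y₁ * pind y₂ * pind y₃ * pind y₄)
        - pind ((p : ℚ_[p]) * y₁) * pind y₂ * pind ((p : ℚ_[p]) * y₃) * pind y₄ := by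
  by_cases h₂ : ‖(p : ℚ_[p]) * y₂‖ ≤ 1
  swap
  · have hy₂ : ¬‖y₂‖ ≤ 1 := mt norm_p_mul_le_one h₂
    simp only [pind_eq_zero h₂, pind_eq_zero hy₂]
    ring
  by_cases h₄ : ‖(p : ℚ_[p]) * y₄‖ ≤ 1
  swap
  · have hy₄ : ¬‖y₄‖ ≤ 1 := mt norm_p_mul_le_one h₄
    simp only [pind_eq_zero h₄, pind_eq_zero hy₄]
    ring
  rw [pind_eq_one h₂, pind_eq_one h₄]
  by_cases hy₄ : ‖y₄‖ ≤ 1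
  · by_cases hy₂ : ‖y₂‖ ≤ 1
    · rw [sum_pind_mul_pind_of_norm_le_one y₁ y₃ hy₂ hy₄, pind_eq_one hy₂, pind_eq_one hy₄]
      linear_combination -pind_p_mul_det_of_norm_le_one y₁ y₃ hy₂ hy₄
    · have hsum := sum_pind_mul_pind_of_norm_p_mul_eq_one y₃ y₁ h₄ (norm_p_mul_eq_one h₂ hy₂)
      rw [show (p : ℚ_[p]) * (y₃ * y₂ - y₄ * y₁) = -(p * (y₁ * y₄ - y₂ * y₃)) by ring,
        pind_neg] at hsum
      simp only [mul_comm (pind (y₃ + _)), pind_eq_zero hy₂] at hsum ⊢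
      linear_combination hsum
  · rw [sum_pind_mul_pind_of_norm_p_mul_eq_one y₁ y₃ h₂ (norm_p_mul_eq_one h₄ hy₄),
      pind_eq_zero hy₄]
    ring

end

/-- for y = (y₁,y₂;y₃,y₄) ∈ ℚ_p^{2×2} with det y = y₁y₄ − y₂y₃,
(i) `σ(y₂)·σ(y₄)·Σ_{a ∈ ℤ_p/pℤ_p} σ(p⁻¹(y₁+ay₂))·σ(p⁻¹(y₃+ay₄))
     = [0,0,0,0](y)·σ(p⁻¹·det y) + p·[1,1,1,1](y) − [0,1,0,1](y)`;
(ii) `σ(py₂)·σ(py₄)·Σ_{a ∈ ℤ_p/pℤ_p} σ(y₁+ay₂)·σ(y₃+ay₄)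
     = [−1,−1,−1,−1](y)·σ(p·det y) + p·[0,0,0,0](y) − [−1,0,−1,0](y)`. -/
theorem stmt12 (p : ℕ) [Fact p.Prime] (y₁ y₂ y₃ y₄ : ℚ_[p]) :
    (pind y₂ * pind y₄ *
        ∑ a ∈ Finset.range p,
          pind ((p : ℚ_[p])⁻¹ * (y₁ + (a : ℚ_[p]) * y₂))
            * pind ((p : ℚ_[p])⁻¹ * (y₃ + (a : ℚ_[p]) * y₄))
      = brk 0 0 0 0 y₁ y₂ y₃ y₄ * pind ((p : ℚ_[p])⁻¹ * (y₁ * y₄ - y₂ * y₃))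
          + (p : ℝ) * brk 1 1 1 1 y₁ y₂ y₃ y₄ - brk 0 1 0 1 y₁ y₂ y₃ y₄) ∧
    (pind ((p : ℚ_[p]) * y₂) * pind ((p : ℚ_[p]) * y₄) *
        ∑ a ∈ Finset.range p,
          pind (y₁ + (a : ℚ_[p]) * y₂) * pind (y₃ + (a : ℚ_[p]) * y₄)
      = brk (-1) (-1) (-1) (-1) y₁ y₂ y₃ y₄ * pind ((p : ℚ_[p]) * (y₁ * y₄ - y₂ * y₃))
          + (p : ℝ) * brk 0 0 0 0 y₁ y₂ y₃ y₄ - brk (-1) 0 (-1) 0 y₁ y₂ y₃ y₄) := by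
  refine ⟨?_, by simpa [brk] using pind_p_mul_mul_sum_pind_mul_pind y₁ y₂ y₃ y₄⟩
  have hp : (p : ℚ_[p]) ≠ 0 := Nat.cast_ne_zero.2 (Fact.out : p.Prime).ne_zero
  have h := pind_p_mul_mul_sum_pind_mul_pind ((p : ℚ_[p])⁻¹ * y₁) ((p : ℚ_[p])⁻¹ * y₂)
    ((p : ℚ_[p])⁻¹ * y₃) ((p : ℚ_[p])⁻¹ * y₄)
  rw [show (p : ℚ_[p])⁻¹ * y₁ * ((p : ℚ_[p])⁻¹ * y₄) - (p : ℚ_[p])⁻¹ * y₂ * ((p : ℚ_[p])⁻¹ * y₃)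
      = (p : ℚ_[p])⁻¹ * ((p : ℚ_[p])⁻¹ * (y₁ * y₄ - y₂ * y₃)) by ring] at h
  simp only [mul_inv_cancel_left₀ hp, mul_left_comm _ (p : ℚ_[p])⁻¹, ← mul_add] at h
  simpa [brk] using h
end
end

section
/- For every y = (y₁,y₂;y₃,y₄) ∈ ℚ_p^{2×2} the following two identities hold: (i) Σ_{(b,c,d) ∈ Λ₁} σ(y₁+p^{−1}b)·σ(y₂+p^{−1}c)·σ(y₃+p^{−1}c)·σ(y₄+p^{−1}d) = [−1,−1,−1,−1](y)·σ(y₂−y₃)·σ(p·det y) − [0,0,0,0](y); (ii) Σ_{(b,c,d) ∈ Λ₂} σ(y₁+p^{−1}b)·σ(y₂+p^{−1}c)·σ(y₃+p^{−1}c)·σ(y₄+p^{−1}d) = [−1,−1,−1,−1](y)·σ(y₂−y₃)·(1 − σ(p·det y)). -/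
noncomputable section
open scoped Classical

/-- `Λ_i`: the set of triples (b,c,d) with b,c,d ∈ {0,…,p−1} such that the symmetric matrix
`(b,c;c,d)` over `𝔽_p = ℤ/pℤ` has rank i. -/
def Lam (p : ℕ) [Fact p.Prime] (i : ℕ) : Finset (ℕ × ℕ × ℕ) :=
  (Finset.range p ×ˢ Finset.range p ×ˢ Finset.range p).filter
    fun t => Matrix.rank
      !![((t.1 : ℕ) : ZMod p), ((t.2.1 : ℕ) : ZMod p);
         ((t.2.1 : ℕ) : ZMod p), ((t.2.2 : ℕ) : ZMod p)] = i

namespace Stmt14Aux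

/-! ### Rank facts for 2×2 matrices over a field -/

section RankLemmas
variable {K : Type*} [Field K]

lemma rank_le_two' (M : Matrix (Fin 2) (Fin 2) K) : M.rank ≤ 2 := M.rank_le_width

lemma rank_zero_iff' (M : Matrix (Fin 2) (Fin 2) K) : M.rank = 0 ↔ M = 0 := by
  constructor
  · intro h
    rw [Matrix.rank] at h
    have hb : LinearMap.range M.mulVecLin = ⊥ := Submodule.finrank_eq_zero.mp h
    have hm : M.mulVecLin = 0 := LinearMap.range_eq_bot.mp hb
    ext i j
    have := congrFun (congrArg (fun f => f (Pi.single j 1)) (congrArg DFunLike.coe hm)) i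
    simpa [Matrix.mulVecLin, Matrix.mulVec_single] using this
  · rintro rfl
    exact Matrix.rank_zero

lemma rank_two_iff' (M : Matrix (Fin 2) (Fin 2) K) : M.rank = 2 ↔ M.det ≠ 0 := by
  constructor
  · intro h hd
    have hr : LinearMap.range M.mulVecLin = ⊤ := by
      apply Submodule.eq_top_of_finrank_eq
      rw [← Matrix.rank, h]
      simp [Module.finrank_fintype_fun_eq_card]
    have hsurj : Function.Surjective M.mulVec := by
      intro v
      obtain ⟨w, hw⟩ := LinearMap.range_eq_top.mp hr v
      exact ⟨w, hw⟩
    have h1 : IsUnit M := Matrix.mulVec_surjective_iff_isUnit.mp hsurj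
    have h2 := (Matrix.isUnit_iff_isUnit_det M).mp h1
    rw [hd] at h2
    simp at h2
  · intro hd
    have : IsUnit M := (Matrix.isUnit_iff_isUnit_det M).mpr (isUnit_iff_ne_zero.mpr hd)
    rw [Matrix.rank_of_isUnit M this]
    simp

lemma rank_one_of (M : Matrix (Fin 2) (Fin 2) K) (h0 : M ≠ 0) (hd : M.det = 0) : M.rank = 1 := by
  have h1 := rank_le_two' M
  have h2 : M.rank ≠ 0 := fun h => h0 ((rank_zero_iff' M).mp h)
  have h3 : M.rank ≠ 2 := fun h => (rank_two_iff' M).mp h hd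
  omega

end RankLemmas

/-! ### p-adic residue facts -/

variable {p : ℕ} [Fact p.Prime]

def mkZ (x : ℚ_[p]) (h : ‖x‖ ≤ 1) : ℤ_[p] := ⟨x, h⟩

@[simp] lemma mkZ_coe (x : ℚ_[p]) (h : ‖x‖ ≤ 1) : ((mkZ x h : ℤ_[p]) : ℚ_[p]) = x := rfl

/-- residue of p*x when p*x is integral -/
def res (x : ℚ_[p]) : ZMod p :=
  if h : ‖(p : ℚ_[p]) * x‖ ≤ 1 then PadicInt.toZMod (mkZ ((p : ℚ_[p]) * x) h) else 0

lemma p_pos : (0:ℝ) < (p:ℝ) := by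
  exact_mod_cast (Fact.out : p.Prime).pos

lemma norm_le_one_iff_mulp (x : ℚ_[p]) : ‖x‖ ≤ 1 ↔ ‖(p : ℚ_[p]) * x‖ ≤ (p:ℝ)⁻¹ := by
  rw [norm_mul, Padic.norm_p]
  exact (mul_le_iff_le_one_right (inv_pos.mpr p_pos)).symm

lemma zint_norm_le_inv_iff (z : ℤ_[p]) : ‖z‖ ≤ (p:ℝ)⁻¹ ↔ PadicInt.toZMod z = 0 := by
  have h1 : ‖z‖ ≤ (p:ℝ)⁻¹ ↔ ‖z‖ < 1 := by
    constructor
    · intro h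
      refine lt_of_le_of_lt h ?_
      rw [inv_lt_one_iff₀]
      right
      exact_mod_cast (Fact.out : p.Prime).one_lt
    · intro h
      have := (PadicInt.norm_le_pow_iff_norm_lt_pow_add_one z (-1)).mpr (by simpa using h)
      simpa using this
  rw [h1, PadicInt.norm_lt_one_iff_dvd]
  rw [← Ideal.mem_span_singleton, ← PadicInt.maximalIdeal_eq_span_p, ← PadicInt.ker_toZMod]
  exact RingHom.mem_ker.symm

lemma qnorm_sub_le_max (a b : ℚ_[p]) : ‖a - b‖ ≤ max ‖a‖ ‖b‖ := by
  rw [sub_eq_add_neg]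
  simpa using Padic.nonarchimedean a (-b)

lemma qnorm_natCast_le_one (b : ℕ) : ‖(b : ℚ_[p])‖ ≤ 1 := by
  have := Padic.norm_int_le_one (p := p) (b : ℤ)
  simpa using this

lemma res_key {x : ℚ_[p]} (h : ‖(p : ℚ_[p]) * x‖ ≤ 1) (b : ℕ) :
    ‖x + (p : ℚ_[p])⁻¹ * (b : ℚ_[p])‖ ≤ 1 ↔ (b : ZMod p) = - res x := by
  have hp0 : (p : ℚ_[p]) ≠ 0 := by
    exact_mod_cast (Fact.out : p.Prime).ne_zero
  have key : (p : ℚ_[p]) * (x + (p : ℚ_[p])⁻¹ * b) = (p : ℚ_[p]) * x + b := by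
    field_simp
  rw [norm_le_one_iff_mulp, key]
  have hzb : (((mkZ ((p:ℚ_[p]) * x) h) + (b : ℤ_[p]) : ℤ_[p]) : ℚ_[p])
      = (p : ℚ_[p]) * x + b := by push_cast [mkZ_coe]; ring
  have hn : ‖(p:ℚ_[p]) * x + (b : ℚ_[p])‖ = ‖(mkZ ((p:ℚ_[p]) * x) h) + (b : ℤ_[p])‖ := by
    rw [PadicInt.norm_def, hzb]
  rw [hn, zint_norm_le_inv_iff, map_add, map_natCast]
  unfold res
  rw [dif_pos h, add_comm, add_eq_zero_iff_eq_neg]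

lemma res_none {x : ℚ_[p]} (h : ¬ ‖(p : ℚ_[p]) * x‖ ≤ 1) (b : ℕ) :
    ¬ ‖x + (p : ℚ_[p])⁻¹ * (b : ℚ_[p])‖ ≤ 1 := by
  intro hb
  apply h
  have h1 : ‖(p : ℚ_[p]) * (x + (p : ℚ_[p])⁻¹ * b)‖ ≤ (p:ℝ)⁻¹ :=
    (norm_le_one_iff_mulp _).mp hb
  have hp0 : (p : ℚ_[p]) ≠ 0 := by
    exact_mod_cast (Fact.out : p.Prime).ne_zero
  have key : (p : ℚ_[p]) * (x + (p : ℚ_[p])⁻¹ * b) = (p : ℚ_[p]) * x + b := by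
    field_simp
  rw [key] at h1
  have h2 : ‖(p:ℚ_[p]) * x + (b:ℚ_[p]) - (b:ℚ_[p])‖ ≤ 1 := by
    have hb1 : ‖((b:ℚ_[p]))‖ ≤ 1 := qnorm_natCast_le_one b
    calc ‖(p:ℚ_[p]) * x + (b:ℚ_[p]) - (b:ℚ_[p])‖
        ≤ max ‖(p:ℚ_[p]) * x + (b:ℚ_[p])‖ ‖(b:ℚ_[p])‖ := qnorm_sub_le_max _ _
      _ ≤ 1 := by
          apply max_le _ hb1
          exact le_trans h1 (by rw [inv_le_one_iff₀]; right; exact_mod_cast (Fact.out : p.Prime).one_le)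
  simpa using h2

lemma res_zero_iff {x : ℚ_[p]} (h : ‖(p : ℚ_[p]) * x‖ ≤ 1) :
    res x = 0 ↔ ‖x‖ ≤ 1 := by
  unfold res
  rw [dif_pos h, ← zint_norm_le_inv_iff]
  have : ‖mkZ ((p:ℚ_[p]) * x) h‖ = ‖(p:ℚ_[p]) * x‖ := rfl
  rw [this, ← norm_le_one_iff_mulp]

lemma res_sub {x x' : ℚ_[p]} (h : ‖(p : ℚ_[p]) * x‖ ≤ 1) (h' : ‖(p : ℚ_[p]) * x'‖ ≤ 1) :
    res (x - x') = res x - res x' := by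
  have hs : ‖(p : ℚ_[p]) * (x - x')‖ ≤ 1 := by
    rw [mul_sub]
    calc ‖(p:ℚ_[p]) * x - (p:ℚ_[p]) * x'‖ ≤ max ‖(p:ℚ_[p]) * x‖ ‖(p:ℚ_[p]) * x'‖ :=
          qnorm_sub_le_max _ _
      _ ≤ 1 := max_le h h'
  unfold res
  rw [dif_pos h, dif_pos h', dif_pos hs, ← map_sub]
  congr 1
  apply PadicInt.ext
  push_cast [mkZ_coe]
  ring

lemma res_mul {x x' : ℚ_[p]} (h : ‖(p : ℚ_[p]) * x‖ ≤ 1) (h' : ‖(p : ℚ_[p]) * x'‖ ≤ 1) :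
    res ((p:ℚ_[p]) * (x * x')) = res x * res x' := by
  have hs : ‖(p : ℚ_[p]) * ((p:ℚ_[p]) * (x * x'))‖ ≤ 1 := by
    have : (p : ℚ_[p]) * ((p:ℚ_[p]) * (x * x')) = ((p:ℚ_[p]) * x) * ((p:ℚ_[p]) * x') := by ring
    rw [this, norm_mul]
    exact mul_le_one₀ h (norm_nonneg _) h'
  unfold res
  rw [dif_pos h, dif_pos h', dif_pos hs, ← map_mul]
  congr 1
  apply PadicInt.ext
  push_cast [mkZ_coe]
  ring

lemma res_eq_iff {x x' : ℚ_[p]} (h : ‖(p : ℚ_[p]) * x‖ ≤ 1) (h' : ‖(p : ℚ_[p]) * x'‖ ≤ 1) :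
    res x = res x' ↔ ‖x - x'‖ ≤ 1 := by
  rw [← sub_eq_zero, ← res_sub h h', res_zero_iff]
  rw [mul_sub]
  calc ‖(p:ℚ_[p]) * x - (p:ℚ_[p]) * x'‖ ≤ max ‖(p:ℚ_[p]) * x‖ ‖(p:ℚ_[p]) * x'‖ :=
        qnorm_sub_le_max _ _
    _ ≤ 1 := max_le h h'

lemma mulp_int {x : ℚ_[p]} (h : ‖x‖ ≤ 1) : ‖(p : ℚ_[p]) * x‖ ≤ 1 := by
  rw [norm_mul, Padic.norm_p]
  apply mul_le_one₀ _ (norm_nonneg x) h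
  rw [inv_le_one_iff₀]
  right
  exact_mod_cast (Fact.out : p.Prime).one_le

/-! ### pind and brk evaluation -/

lemma pind_one {x : ℚ_[p]} (h : ‖x‖ ≤ 1) : pind x = 1 := if_pos h

lemma pind_zero {x : ℚ_[p]} (h : ¬ ‖x‖ ≤ 1) : pind x = 0 := if_neg h

lemma brk_neg_one (y₁ y₂ y₃ y₄ : ℚ_[p]) :
    brk (-1) (-1) (-1) (-1) y₁ y₂ y₃ y₄
      = pind ((p : ℚ_[p]) * y₁) * pind ((p : ℚ_[p]) * y₂)
        * pind ((p : ℚ_[p]) * y₃) * pind ((p : ℚ_[p]) * y₄) := by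
  norm_num [brk]

lemma brk_zero' (y₁ y₂ y₃ y₄ : ℚ_[p]) :
    brk 0 0 0 0 y₁ y₂ y₃ y₄ = pind y₁ * pind y₂ * pind y₃ * pind y₄ := by
  norm_num [brk]

def Cpred (y₁ y₂ y₃ y₄ : ℚ_[p]) (t : ℕ × ℕ × ℕ) : Prop :=
  ‖y₁ + (p : ℚ_[p])⁻¹ * (t.1 : ℚ_[p])‖ ≤ 1
    ∧ ‖y₂ + (p : ℚ_[p])⁻¹ * (t.2.1 : ℚ_[p])‖ ≤ 1
    ∧ ‖y₃ + (p : ℚ_[p])⁻¹ * (t.2.1 : ℚ_[p])‖ ≤ 1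
    ∧ ‖y₄ + (p : ℚ_[p])⁻¹ * (t.2.2 : ℚ_[p])‖ ≤ 1

lemma sum_eq_card (y₁ y₂ y₃ y₄ : ℚ_[p]) (s : Finset (ℕ × ℕ × ℕ)) :
    (∑ t ∈ s,
        pind (y₁ + (p : ℚ_[p])⁻¹ * (t.1 : ℚ_[p]))
          * pind (y₂ + (p : ℚ_[p])⁻¹ * (t.2.1 : ℚ_[p]))
          * pind (y₃ + (p : ℚ_[p])⁻¹ * (t.2.1 : ℚ_[p]))
          * pind (y₄ + (p : ℚ_[p])⁻¹ * (t.2.2 : ℚ_[p])))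
      = ((s.filter (Cpred y₁ y₂ y₃ y₄)).card : ℝ) := by
  rw [← Finset.sum_boole]
  unfold Cpred
  refine Finset.sum_congr rfl fun t _ => ?_
  unfold pind
  split_ifs <;> norm_num <;> tauto

end Stmt14Aux

/-- for y = (y₁,y₂;y₃,y₄) ∈ ℚ_p^{2×2} with det y = y₁y₄ − y₂y₃,
(i) `Σ_{(b,c,d) ∈ Λ₁} σ(y₁+p⁻¹b)·σ(y₂+p⁻¹c)·σ(y₃+p⁻¹c)·σ(y₄+p⁻¹d)
     = [−1,−1,−1,−1](y)·σ(y₂−y₃)·σ(p·det y) − [0,0,0,0](y)`;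
(ii) `Σ_{(b,c,d) ∈ Λ₂} σ(y₁+p⁻¹b)·σ(y₂+p⁻¹c)·σ(y₃+p⁻¹c)·σ(y₄+p⁻¹d)
     = [−1,−1,−1,−1](y)·σ(y₂−y₃)·(1 − σ(p·det y))`. -/
theorem stmt14 (p : ℕ) [Fact p.Prime] (y₁ y₂ y₃ y₄ : ℚ_[p]) :
    (∑ t ∈ Lam p 1,
        pind (y₁ + (p : ℚ_[p])⁻¹ * (t.1 : ℚ_[p]))
          * pind (y₂ + (p : ℚ_[p])⁻¹ * (t.2.1 : ℚ_[p]))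
          * pind (y₃ + (p : ℚ_[p])⁻¹ * (t.2.1 : ℚ_[p]))
          * pind (y₄ + (p : ℚ_[p])⁻¹ * (t.2.2 : ℚ_[p]))
      = brk (-1) (-1) (-1) (-1) y₁ y₂ y₃ y₄ * pind (y₂ - y₃)
          * pind ((p : ℚ_[p]) * (y₁ * y₄ - y₂ * y₃))
        - brk 0 0 0 0 y₁ y₂ y₃ y₄) ∧
    (∑ t ∈ Lam p 2,
        pind (y₁ + (p : ℚ_[p])⁻¹ * (t.1 : ℚ_[p]))
          * pind (y₂ + (p : ℚ_[p])⁻¹ * (t.2.1 : ℚ_[p]))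
          * pind (y₃ + (p : ℚ_[p])⁻¹ * (t.2.1 : ℚ_[p]))
          * pind (y₄ + (p : ℚ_[p])⁻¹ * (t.2.2 : ℚ_[p]))
      = brk (-1) (-1) (-1) (-1) y₁ y₂ y₃ y₄ * pind (y₂ - y₃)
          * (1 - pind ((p : ℚ_[p]) * (y₁ * y₄ - y₂ * y₃)))) := by
  classical
  open Stmt14Aux in
  haveI : NeZero p := ⟨(Fact.out : p.Prime).ne_zero⟩
  rw [sum_eq_card, sum_eq_card]
  by_cases H : ‖(p:ℚ_[p]) * y₁‖ ≤ 1 ∧ ‖(p:ℚ_[p]) * y₂‖ ≤ 1 ∧ ‖(p:ℚ_[p]) * y₃‖ ≤ 1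
      ∧ ‖(p:ℚ_[p]) * y₄‖ ≤ 1 ∧ ‖y₂ - y₃‖ ≤ 1
  case neg =>
    -- degenerate case: no triple contributes, and the RHS vanishes
    have hfil : ∀ i : ℕ, (Lam p i).filter (Cpred y₁ y₂ y₃ y₄) = ∅ := by
      intro i
      rw [Finset.filter_eq_empty_iff]
      intro t ht hc
      obtain ⟨c1, c2, c3, c4⟩ := hc
      apply H
      have H1 : ‖(p:ℚ_[p]) * y₁‖ ≤ 1 := by
        by_contra hn; exact res_none hn t.1 c1
      have H2 : ‖(p:ℚ_[p]) * y₂‖ ≤ 1 := by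
        by_contra hn; exact res_none hn t.2.1 c2
      have H3 : ‖(p:ℚ_[p]) * y₃‖ ≤ 1 := by
        by_contra hn; exact res_none hn t.2.1 c3
      have H4 : ‖(p:ℚ_[p]) * y₄‖ ≤ 1 := by
        by_contra hn; exact res_none hn t.2.2 c4
      have e2 : (t.2.1 : ZMod p) = - res y₂ := (res_key H2 t.2.1).mp c2
      have e3 : (t.2.1 : ZMod p) = - res y₃ := (res_key H3 t.2.1).mp c3
      have h23 : ‖y₂ - y₃‖ ≤ 1 := by
        rw [← res_eq_iff H2 H3]
        have := e2.symm.trans e3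
        exact neg_injective this
      exact ⟨H1, H2, H3, H4, h23⟩
    have hRHS : brk (-1) (-1) (-1) (-1) y₁ y₂ y₃ y₄ * pind (y₂ - y₃) = 0
        ∧ brk 0 0 0 0 y₁ y₂ y₃ y₄ = 0 := by
      rw [brk_neg_one, brk_zero']
      by_cases H1 : ‖(p:ℚ_[p]) * y₁‖ ≤ 1
      case neg =>
        have h1' : ¬ ‖y₁‖ ≤ 1 := fun h => H1 (mulp_int h)
        rw [pind_zero H1, pind_zero h1']
        constructor <;> ring
      case pos =>
      by_cases H2 : ‖(p:ℚ_[p]) * y₂‖ ≤ 1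
      case neg =>
        have h2' : ¬ ‖y₂‖ ≤ 1 := fun h => H2 (mulp_int h)
        rw [pind_zero H2, pind_zero h2']
        constructor <;> ring
      case pos =>
      by_cases H3 : ‖(p:ℚ_[p]) * y₃‖ ≤ 1
      case neg =>
        have h3' : ¬ ‖y₃‖ ≤ 1 := fun h => H3 (mulp_int h)
        rw [pind_zero H3, pind_zero h3']
        constructor <;> ring
      case pos =>
      by_cases H4 : ‖(p:ℚ_[p]) * y₄‖ ≤ 1
      case neg =>
        have h4' : ¬ ‖y₄‖ ≤ 1 := fun h => H4 (mulp_int h)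
        rw [pind_zero H4, pind_zero h4']
        constructor <;> ring
      case pos =>
      have h23 : ¬ ‖y₂ - y₃‖ ≤ 1 := fun h => H ⟨H1, H2, H3, H4, h⟩
      have h23' : ¬ (‖y₂‖ ≤ 1 ∧ ‖y₃‖ ≤ 1) := by
        rintro ⟨h2, h3⟩
        exact h23 (le_trans (qnorm_sub_le_max y₂ y₃) (max_le h2 h3))
      rw [pind_zero h23]
      constructor
      · ring
      · rcases not_and_or.mp h23' with h | h
        · rw [pind_zero h]; ring
        · rw [pind_zero h]; ring
    rw [hfil 1, hfil 2]
    constructor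
    · simp only [Finset.card_empty, Nat.cast_zero]
      rw [hRHS.1, hRHS.2]
      ring
    · simp only [Finset.card_empty, Nat.cast_zero]
      rw [hRHS.1]
      ring
  case pos =>
    obtain ⟨H1, H2, H3, H4, h23⟩ := H
    have ha23 : res y₂ = res y₃ := (res_eq_iff H2 H3).mpr h23
    set t₀ : ℕ × ℕ × ℕ := ((-res y₁).val, (-res y₂).val, (-res y₄).val) with ht₀
    set M₀ : Matrix (Fin 2) (Fin 2) (ZMod p) :=
      !![(((-res y₁).val : ℕ) : ZMod p), (((-res y₂).val : ℕ) : ZMod p);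
         (((-res y₂).val : ℕ) : ZMod p), (((-res y₄).val : ℕ) : ZMod p)] with hM₀
    have hmem : ∀ t : ℕ × ℕ × ℕ,
        (t ∈ (Finset.range p ×ˢ Finset.range p ×ˢ Finset.range p)
          ∧ Cpred y₁ y₂ y₃ y₄ t) ↔ t = t₀ := by
      rintro ⟨b, c, d⟩
      constructor
      · rintro ⟨hr, c1, c2, c3, c4⟩
        have hb : b < p ∧ c < p ∧ d < p := by
          simpa [Finset.mem_product, Finset.mem_range] using hr
        have e1 : (b : ZMod p) = - res y₁ := (res_key H1 b).mp c1
        have e2 : (c : ZMod p) = - res y₂ := (res_key H2 c).mp c2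
        have e4 : (d : ZMod p) = - res y₄ := (res_key H4 d).mp c4
        have hb' : b = (-res y₁).val := by rw [← e1, ZMod.val_cast_of_lt hb.1]
        have hc' : c = (-res y₂).val := by rw [← e2, ZMod.val_cast_of_lt hb.2.1]
        have hd' : d = (-res y₄).val := by rw [← e4, ZMod.val_cast_of_lt hb.2.2]
        simp [ht₀, Prod.ext_iff, hb', hc', hd']
      · intro h
        rw [h, ht₀]
        refine ⟨?_, ?_, ?_, ?_, ?_⟩
        · simp [Finset.mem_product, Finset.mem_range, ZMod.val_lt]
        · exact (res_key H1 _).mpr (ZMod.natCast_rightInverse _)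
        · exact (res_key H2 _).mpr (ZMod.natCast_rightInverse _)
        · refine (res_key H3 _).mpr ?_
          rw [← ha23]
          exact ZMod.natCast_rightInverse _
        · exact (res_key H4 _).mpr (ZMod.natCast_rightInverse _)
    have hfil : ∀ i : ℕ, (Lam p i).filter (Cpred y₁ y₂ y₃ y₄)
        = if M₀.rank = i then {t₀} else ∅ := by
      intro i
      ext t
      rw [Finset.mem_filter, Lam, Finset.mem_filter]
      constructor
      · rintro ⟨⟨hr, hrank⟩, hc⟩
        have := (hmem t).mp ⟨hr, hc⟩
        subst this
        have hrank' : M₀.rank = i := by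
          rw [hM₀]
          simpa [ht₀] using hrank
        rw [if_pos hrank']
        simp
      · intro ht
        by_cases hrk : M₀.rank = i
        · rw [if_pos hrk] at ht
          have : t = t₀ := by simpa using ht
          subst this
          obtain ⟨hr, hc⟩ := (hmem t₀).mpr rfl
          refine ⟨⟨hr, ?_⟩, hc⟩
          rw [← hrk, hM₀]
          try simp [ht₀]
        · rw [if_neg hrk] at ht
          simp at ht
    have hMne : M₀ = !![-res y₁, -res y₂; -res y₂, -res y₄] := by
      rw [hM₀, ZMod.natCast_rightInverse (-res y₁), ZMod.natCast_rightInverse (-res y₂),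
        ZMod.natCast_rightInverse (-res y₄)]
    have hA : ‖(p:ℚ_[p]) * ((p:ℚ_[p]) * (y₁ * y₄))‖ ≤ 1 := by
      have e : (p:ℚ_[p]) * ((p:ℚ_[p]) * (y₁ * y₄)) = ((p:ℚ_[p]) * y₁) * ((p:ℚ_[p]) * y₄) := by
        ring
      rw [e, norm_mul]
      exact mul_le_one₀ H1 (norm_nonneg _) H4
    have hB : ‖(p:ℚ_[p]) * ((p:ℚ_[p]) * (y₂ * y₃))‖ ≤ 1 := by
      have e : (p:ℚ_[p]) * ((p:ℚ_[p]) * (y₂ * y₃)) = ((p:ℚ_[p]) * y₂) * ((p:ℚ_[p]) * y₃) := by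
        ring
      rw [e, norm_mul]
      exact mul_le_one₀ H2 (norm_nonneg _) H3
    have hC2 : ‖(p:ℚ_[p]) * ((p:ℚ_[p]) * (y₁ * y₄ - y₂ * y₃))‖ ≤ 1 := by
      have e : (p:ℚ_[p]) * ((p:ℚ_[p]) * (y₁ * y₄ - y₂ * y₃))
          = (p:ℚ_[p]) * ((p:ℚ_[p]) * (y₁ * y₄)) - (p:ℚ_[p]) * ((p:ℚ_[p]) * (y₂ * y₃)) := by
        ring
      rw [e]
      exact le_trans (qnorm_sub_le_max _ _) (max_le hA hB)
    have hdet : M₀.det = 0 ↔ ‖(p:ℚ_[p]) * (y₁ * y₄ - y₂ * y₃)‖ ≤ 1 := by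
      rw [hMne, Matrix.det_fin_two_of]
      have e : -res y₁ * -res y₄ - -res y₂ * -res y₂
          = res y₁ * res y₄ - res y₂ * res y₃ := by
        have : -res y₁ * -res y₄ - -res y₂ * -res y₂
            = res y₁ * res y₄ - res y₂ * res y₂ := by ring
        rw [this, ha23]
      rw [e, ← res_mul H1 H4, ← res_mul H2 H3, ← res_sub hA hB]
      have harg : (p:ℚ_[p]) * (y₁ * y₄) - (p:ℚ_[p]) * (y₂ * y₃)
          = (p:ℚ_[p]) * (y₁ * y₄ - y₂ * y₃) := by ring
      rw [harg, res_zero_iff hC2]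
    have hzero : M₀ = 0 ↔ (‖y₁‖ ≤ 1 ∧ ‖y₂‖ ≤ 1 ∧ ‖y₃‖ ≤ 1 ∧ ‖y₄‖ ≤ 1) := by
      rw [hMne]
      constructor
      · intro h
        have e1 : -res y₁ = 0 := by simpa using congrFun (congrFun h 0) 0
        have e2 : -res y₂ = 0 := by simpa using congrFun (congrFun h 0) 1
        have e4 : -res y₄ = 0 := by simpa using congrFun (congrFun h 1) 1
        have r1 : res y₁ = 0 := neg_eq_zero.mp e1
        have r2 : res y₂ = 0 := neg_eq_zero.mp e2
        have r4 : res y₄ = 0 := neg_eq_zero.mp e4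
        have r3 : res y₃ = 0 := ha23 ▸ r2
        exact ⟨(res_zero_iff H1).mp r1, (res_zero_iff H2).mp r2,
          (res_zero_iff H3).mp r3, (res_zero_iff H4).mp r4⟩
      · rintro ⟨h1, h2, h3, h4⟩
        have r1 : res y₁ = 0 := (res_zero_iff H1).mpr h1
        have r2 : res y₂ = 0 := (res_zero_iff H2).mpr h2
        have r4 : res y₄ = 0 := (res_zero_iff H4).mpr h4
        ext i j
        fin_cases i <;> fin_cases j <;> simp [r1, r2, r4]
    have hbrkneg : brk (-1) (-1) (-1) (-1) y₁ y₂ y₃ y₄ = 1 := by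
      rw [brk_neg_one, pind_one H1, pind_one H2, pind_one H3, pind_one H4]
      ring
    have hp23 : pind (y₂ - y₃) = 1 := pind_one h23
    rw [hfil 1, hfil 2, hbrkneg, hp23]
    by_cases hD : ‖(p:ℚ_[p]) * (y₁ * y₄ - y₂ * y₃)‖ ≤ 1
    · rw [pind_one hD]
      by_cases hZ : ‖y₁‖ ≤ 1 ∧ ‖y₂‖ ≤ 1 ∧ ‖y₃‖ ≤ 1 ∧ ‖y₄‖ ≤ 1
      · have hr : M₀.rank = 0 := (rank_zero_iff' M₀).mpr (hzero.mpr hZ)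
        have hbrk0 : brk 0 0 0 0 y₁ y₂ y₃ y₄ = 1 := by
          rw [brk_zero', pind_one hZ.1, pind_one hZ.2.1, pind_one hZ.2.2.1,
            pind_one hZ.2.2.2]
          ring
        rw [hbrk0, if_neg (by omega : ¬ M₀.rank = 1), if_neg (by omega : ¬ M₀.rank = 2)]
        norm_num
      · have hMne0 : M₀ ≠ 0 := fun h => hZ (hzero.mp h)
        have hr : M₀.rank = 1 := rank_one_of M₀ hMne0 (hdet.mpr hD)
        have hbrk0 : brk 0 0 0 0 y₁ y₂ y₃ y₄ = 0 := by
          rw [brk_zero']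
          rcases not_and_or.mp hZ with h | h'
          · rw [pind_zero h]; ring
          · rcases not_and_or.mp h' with h | h''
            · rw [pind_zero h]; ring
            · rcases not_and_or.mp h'' with h | h
              · rw [pind_zero h]; ring
              · rw [pind_zero h]; ring
        rw [hbrk0, if_pos hr, if_neg (by omega : ¬ M₀.rank = 2)]
        norm_num
    · rw [pind_zero hD]
      have hr : M₀.rank = 2 := (rank_two_iff' M₀).mpr (fun h => hD (hdet.mp h))
      have hZn : ¬ (‖y₁‖ ≤ 1 ∧ ‖y₂‖ ≤ 1 ∧ ‖y₃‖ ≤ 1 ∧ ‖y₄‖ ≤ 1) := by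
        intro hZ
        have : M₀ = 0 := hzero.mpr hZ
        have : M₀.det = 0 := by rw [this]; simp
        exact hD (hdet.mp this)
      have hbrk0 : brk 0 0 0 0 y₁ y₂ y₃ y₄ = 0 := by
        rw [brk_zero']
        rcases not_and_or.mp hZn with h | h'
        · rw [pind_zero h]; ring
        · rcases not_and_or.mp h' with h | h''
          · rw [pind_zero h]; ring
          · rcases not_and_or.mp h'' with h | h
            · rw [pind_zero h]; ring
            · rw [pind_zero h]; ring
      rw [hbrk0, if_neg (by omega : ¬ M₀.rank = 1), if_pos hr]
      norm_num
end
end
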